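/- arXiv:2503.14313 — 5 statements merged into one kernel-verified Lean document; each statement's English description precedes it below -/
import Mathlib

section
/- Fix p ∈ (0,1) and an integer r ≥ 0, and let a = −1/log(1−p). For the (fixed) geometric distribution with pmf p_ℓ = p(1−p)^{ℓ−1}, ℓ = 1, 2, …, the quantity s²_{r,n} satisfies: 2·max{0, a(r+1) − (r+1)^{r+1}e^{−(r+1)} − (r+2)^{r+2}e^{−(r+2)}} ≤ liminf_{n→∞} s²_{r,n} ≤ limsup_{n→∞} s²_{r,n} ≤ 2a(r+1) + 2(r+1)^{r+1}e^{−(r+1)} + 2(r+2)^{r+2}e^{−(r+2)}. -/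
/-!
Write `q = 1 - p`, `x = n p` and `f_k(u) = u^k e^{-u}`. The letter `ℓ = j + 1` contributes
`((r+1) f_{r+1}(x q^j) + f_{r+2}(x q^j)) / r!` to `s²_{r,n}`. For `k ≥ 1` the function
`t ↦ f_k(x q^t)` increases and then decreases, so its sum over `t ∈ ℕ` differs from its
integral over `[0, ∞)` by at most its maximum `f_k(k) = k^k e^{-k}`; the substitution `u = x q^t`
turns that integral into `a ∫_0^x f_{k-1}`, which tends to `a (k-1)!` with `a = -1/log q`.
The two contributions therefore add up to `2a(r+1)`, up to an error of at most
`((r+1) f_{r+1}(r+1) + f_{r+2}(r+2)) / r! ≤ 2 f_{r+1}(r+1) + 2 f_{r+2}(r+2)`.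
-/

open MeasureTheory ProbabilityTheory Filter Topology
open scoped NNReal

noncomputable section

/-- pmf of the dynamic geometric distribution with parameter `a`:
`p_ℓ = (e^{1/a} - 1) e^{-ℓ/a}` for `ℓ = 1, 2, …` (letter `0` is not used). -/
def geomPMF (a : ℝ) (ℓ : ℕ) : ℝ :=
  if ℓ = 0 then 0 else (Real.exp (1 / a) - 1) * Real.exp (-(ℓ : ℝ) / a)

/-- pmf of the fixed geometric distribution: `p_ℓ = p (1-p)^{ℓ-1}` for `ℓ = 1, 2, …`. -/
def fixedGeomPMF (p : ℝ) (ℓ : ℕ) : ℝ :=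
  if ℓ = 0 then 0 else p * (1 - p) ^ (ℓ - 1)

/-- pmf of the dynamic discrete uniform distribution with parameter `γ` and sample size `n`:
`p_ℓ^{(n)} = 1/⌊n^γ⌋` for `ℓ = 1, …, ⌊n^γ⌋`. -/
def unifPMF (γ : ℝ) (n : ℕ) (ℓ : ℕ) : ℝ :=
  if 1 ≤ ℓ ∧ ℓ ≤ ⌊(n : ℝ) ^ γ⌋₊ then (⌊(n : ℝ) ^ γ⌋₊ : ℝ)⁻¹ else 0

/-- pmf of the fixed discrete uniform distribution on `{1, …, K}`. -/
def fixedUnifPMF (K : ℕ) (ℓ : ℕ) : ℝ :=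
  if 1 ≤ ℓ ∧ ℓ ≤ K then (K : ℝ)⁻¹ else 0

/-- `y_{ℓ,n}`: the number of times letter `ℓ` appears in the sample `ω`. -/
def occ {n : ℕ} (ω : Fin n → ℕ) (ℓ : ℕ) : ℕ :=
  (Finset.univ.filter fun i => ω i = ℓ).card

/-- `N_{r,n}`: the number of letters appearing exactly `r` times in `ω` (valid for `r ≥ 1`). -/
def Ncount {n : ℕ} (ω : Fin n → ℕ) (r : ℕ) : ℕ :=
  ((Finset.univ.image ω).filter fun ℓ => occ ω ℓ = r).card

/-- `π_{r,n}`: the `r`-th occupancy probability. -/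
def occProb {n : ℕ} (p : ℕ → ℝ) (ω : Fin n → ℕ) (r : ℕ) : ℝ :=
  ∑' ℓ : ℕ, p ℓ * (if occ ω ℓ = r then 1 else 0)

/-- `T_{r,n}`: Turing's estimator. -/
def turing {n : ℕ} (ω : Fin n → ℕ) (r : ℕ) : ℝ :=
  ((r : ℝ) + 1) * (Ncount ω (r + 1) : ℝ) / (n : ℝ)

/-- `ŝ_{r,n} = sqrt((r+1)² N_{r+1,n} + (r+2)(r+1) N_{r+2,n})`. -/
def shat {n : ℕ} (ω : Fin n → ℕ) (r : ℕ) : ℝ :=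
  Real.sqrt (((r : ℝ) + 1) ^ 2 * (Ncount ω (r + 1) : ℝ) +
    ((r : ℝ) + 2) * ((r : ℝ) + 1) * (Ncount ω (r + 2) : ℝ))

/-- the joint pmf of an i.i.d. sample of size `n` from the pmf `p`. -/
def jointPMF {n : ℕ} (p : ℕ → ℝ) (ω : Fin n → ℕ) : ℝ := ∏ i, p (ω i)

/-- the normalized statistic `(n/ŝ_{r,n})(T_{r,n} - π_{r,n})`, interpreted as `0`
when `ŝ_{r,n} = 0` (which is automatic from Lean's convention `x / 0 = 0`). -/
def normStat {n : ℕ} (p : ℕ → ℝ) (ω : Fin n → ℕ) (r : ℕ) : ℝ :=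
  (n : ℝ) / shat ω r * (turing ω r - occProb p ω r)

open scoped Classical in
/-- the statistic `T_{r,n} (n/ŝ_{r,n}) (T_{r,n}/π_{r,n} - 1)`, interpreted as `0` on the
event where `ŝ_{r,n} = 0` or `π_{r,n} = 0`. -/
def ratioStat {n : ℕ} (p : ℕ → ℝ) (ω : Fin n → ℕ) (r : ℕ) : ℝ :=
  if shat ω r = 0 ∨ occProb p ω r = 0 then 0
  else turing ω r * ((n : ℝ) / shat ω r) * (turing ω r / occProb p ω r - 1)

/-- `s²_{r,n} = Σ_ℓ (r+1+n p_ℓ) e^{-n p_ℓ} (n p_ℓ)^{r+1} / r!`. -/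
def s2 (p : ℕ → ℝ) (r n : ℕ) : ℝ :=
  ∑' ℓ : ℕ, ((r : ℝ) + 1 + (n : ℝ) * p ℓ) * Real.exp (-((n : ℝ) * p ℓ)) *
    ((n : ℝ) * p ℓ) ^ (r + 1) / (r.factorial : ℝ)

/-- `h_{n,η}(x) = e^{-n f_n(x)} (n f_n(x))^η` where `f_n(x) = (e^{1/a_n} - 1) e^{-x/a_n}`. -/
def hfun (a : ℝ) (n : ℕ) (η : ℝ) (x : ℝ) : ℝ :=
  Real.exp (-((n : ℝ) * ((Real.exp (1 / a) - 1) * Real.exp (-x / a)))) *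
    ((n : ℝ) * ((Real.exp (1 / a) - 1) * Real.exp (-x / a))) ^ η

open Real Set
open scoped Nat

def powExpNeg (k : ℕ) (u : ℝ) : ℝ := u ^ k * exp (-u)

section powExpNeg

lemma continuous_powExpNeg (k : ℕ) : Continuous (powExpNeg k) := by
  unfold powExpNeg; fun_prop

lemma powExpNeg_nonneg (k : ℕ) {u : ℝ} (hu : 0 ≤ u) : 0 ≤ powExpNeg k u := by
  unfold powExpNeg; positivity

lemma powExpNeg_succ (k : ℕ) (u : ℝ) : powExpNeg (k + 1) u = u * powExpNeg k u := by
  simp only [powExpNeg, pow_succ]; ring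

lemma hasDerivAt_powExpNeg_succ (k : ℕ) (u : ℝ) :
    HasDerivAt (powExpNeg (k + 1)) (u ^ k * (k + 1 - u) * exp (-u)) u := by
  have h : HasDerivAt (fun v ↦ v ^ (k + 1) * exp (-v)) _ u :=
    (hasDerivAt_pow (k + 1) u).fun_mul (hasDerivAt_neg u).exp
  exact h.congr_deriv (by push_cast; ring)

lemma monotoneOn_powExpNeg_succ (k : ℕ) : MonotoneOn (powExpNeg (k + 1)) (Icc 0 (k + 1)) := by
  refine monotoneOn_of_deriv_nonneg (convex_Icc _ _) (continuous_powExpNeg _).continuousOn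
    (fun u _ ↦ (hasDerivAt_powExpNeg_succ k u).differentiableAt.differentiableWithinAt)
    fun u hu ↦ ?_
  rw [interior_Icc] at hu
  rw [(hasDerivAt_powExpNeg_succ k u).deriv]
  have : 0 ≤ (k : ℝ) + 1 - u := by linarith [hu.2]
  have : 0 ≤ u := hu.1.le
  positivity

lemma antitoneOn_powExpNeg_succ (k : ℕ) : AntitoneOn (powExpNeg (k + 1)) (Ici (k + 1)) := by
  refine antitoneOn_of_deriv_nonpos (convex_Ici _) (continuous_powExpNeg _).continuousOn
    (fun u _ ↦ (hasDerivAt_powExpNeg_succ k u).differentiableAt.differentiableWithinAt)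
    fun u hu ↦ ?_
  rw [interior_Ici] at hu
  rw [(hasDerivAt_powExpNeg_succ k u).deriv]
  have hu0 : 0 ≤ u := by linarith [hu.out, (k.cast_nonneg : (0 : ℝ) ≤ k)]
  have : (k : ℝ) + 1 - u ≤ 0 := by linarith [hu.out]
  exact mul_nonpos_of_nonpos_of_nonneg
    (mul_nonpos_of_nonneg_of_nonpos (by positivity) this) (exp_pos _).le

lemma tendsto_intervalIntegral_powExpNeg (k : ℕ) :
    Tendsto (fun x ↦ ∫ u in (0 : ℝ)..x, powExpNeg k u) atTop (𝓝 k !) := by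
  have hGamma : ∀ u ∈ Ioi (0 : ℝ), exp (-u) * u ^ ((k + 1 : ℝ) - 1) = powExpNeg k u :=
    fun u _ ↦ by rw [add_sub_cancel_right, rpow_natCast, powExpNeg, mul_comm]
  have hint : IntegrableOn (powExpNeg k) (Ioi 0) :=
    (GammaIntegral_convergent (by positivity)).congr_fun hGamma measurableSet_Ioi
  have hval : ∫ u in Ioi (0 : ℝ), powExpNeg k u = k ! := by
    rw [← Gamma_nat_eq_factorial, Gamma_eq_integral (by positivity)]
    exact (setIntegral_congr_fun measurableSet_Ioi hGamma).symm
  simpa [hval] using intervalIntegral_tendsto_integral_Ioi 0 hint tendsto_id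

end powExpNeg

section Unimodal

variable {g : ℝ → ℝ} {c : ℝ}

lemma apply_le_apply_of_unimodal (hmono : MonotoneOn g (Icc 0 c)) (hanti : AntitoneOn g (Ici c))
    {t : ℝ} (ht : 0 ≤ t) : g t ≤ g c := by
  rcases le_total t c with h | h
  · exact hmono ⟨ht, h⟩ ⟨ht.trans h, le_rfl⟩ h
  · exact hanti (mem_Ici.2 le_rfl) (mem_Ici.2 h) h

lemma apply_add_apply_add_one_le_of_unimodal {a M : ℝ} (hg : Continuous g)
    (hmono : MonotoneOn g (Icc a c)) (hanti : AntitoneOn g (Ici c))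
    (hM : ∀ t ∈ Icc a (a + 1), g t ≤ M) :
    g a + g (a + 1) ≤ M + ∫ t in a..a + 1, g t := by
  -- of the two samples, the larger is at most `M` and the smaller at most the integral
  have hmin : ∀ t ∈ Icc a (a + 1), min (g a) (g (a + 1)) ≤ g t := by
    intro t ht
    rcases le_total t c with h | h
    · exact (min_le_left _ _).trans (hmono ⟨le_rfl, ht.1.trans h⟩ ⟨ht.1, h⟩ ht.1)
    · exact (min_le_right _ _).trans (hanti (mem_Ici.2 h) (mem_Ici.2 (h.trans ht.2)) ht.2)
  have hint : min (g a) (g (a + 1)) ≤ ∫ t in a..a + 1, g t := by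
    simpa using intervalIntegral.integral_mono_on (by linarith)
      (intervalIntegrable_const (μ := volume)) (hg.intervalIntegrable _ _) hmin
  have hmax : max (g a) (g (a + 1)) ≤ M :=
    max_le (hM a ⟨le_rfl, by linarith⟩) (hM _ ⟨by linarith, le_rfl⟩)
  linarith [max_add_min (g a) (g (a + 1))]

lemma sum_range_le_intervalIntegral_add_of_unimodal (hg : Continuous g) (hc : 0 ≤ c)
    (hmono : MonotoneOn g (Icc 0 c)) (hanti : AntitoneOn g (Ici c)) (j : ℕ) :
    ∑ i ∈ Finset.range (⌊c⌋₊ + 2 + j), g i ≤ (∫ t in (0 : ℝ)..(⌊c⌋₊ + 1 + j : ℕ), g t) + g c := by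
  set k := ⌊c⌋₊
  have hk : (k : ℝ) ≤ c := Nat.floor_le hc
  have hk' : c ≤ k + 1 := (Nat.lt_floor_add_one c).le
  have hrise : ∑ i ∈ Finset.range k, g i ≤ ∫ t in (0 : ℝ)..k, g t := by
    simpa using (hmono.mono (Icc_subset_Icc_right (by simpa using hk))).sum_le_integral
  have hpeak : g k + g (k + 1) ≤ g c + ∫ t in (k : ℝ)..k + 1, g t :=
    apply_add_apply_add_one_le_of_unimodal hg (hmono.mono (Icc_subset_Icc_left k.cast_nonneg))
      hanti fun t ht ↦ apply_le_apply_of_unimodal hmono hanti (k.cast_nonneg.trans ht.1)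
  have hfall :
      ∑ i ∈ Finset.range j, g ((k + 1 + 1 + i : ℕ)) ≤ ∫ t in (k + 1 : ℝ)..(k + 1) + j, g t := by
    convert (hanti.mono fun t ht ↦ hk'.trans ht.1).sum_le_integral using 3 with i
    push_cast; ring
  have hsplit : (∫ t in (0 : ℝ)..k, g t) + (∫ t in (k : ℝ)..k + 1, g t)
      + ∫ t in (k + 1 : ℝ)..(k + 1) + j, g t = ∫ t in (0 : ℝ)..(k + 1 + j : ℕ), g t := by
    simp only [intervalIntegral.integral_add_adjacent_intervals (hg.intervalIntegrable _ _)
      (hg.intervalIntegrable _ _)]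
    push_cast; ring_nf
  rw [Finset.sum_range_add, show k + 2 = k + 1 + 1 from rfl, Finset.sum_range_succ,
    Finset.sum_range_succ]
  push_cast at *
  linarith

lemma intervalIntegral_le_sum_range_add_of_unimodal (hg : Continuous g) (hg0 : 0 ≤ g 0)
    (hc : 0 ≤ c) (hmono : MonotoneOn g (Icc 0 c)) (hanti : AntitoneOn g (Ici c)) (j : ℕ) :
    ∫ t in (0 : ℝ)..(⌊c⌋₊ + 1 + j : ℕ), g t ≤ ∑ i ∈ Finset.range (⌊c⌋₊ + 1 + j), g i + g c := by
  set k := ⌊c⌋₊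
  have hk : (k : ℝ) ≤ c := Nat.floor_le hc
  have hk' : c ≤ k + 1 := (Nat.lt_floor_add_one c).le
  have hrise : ∫ t in (0 : ℝ)..k, g t ≤ ∑ i ∈ Finset.range k, g (i + 1 : ℕ) := by
    simpa using (hmono.mono (Icc_subset_Icc_right (by simpa using hk))).integral_le_sum
  have hpeak : ∫ t in (k : ℝ)..k + 1, g t ≤ g c := by
    simpa using intervalIntegral.integral_mono_on (by linarith : (k : ℝ) ≤ k + 1)
      (hg.intervalIntegrable _ _) (intervalIntegrable_const (μ := volume))
      fun t ht ↦ apply_le_apply_of_unimodal hmono hanti (k.cast_nonneg.trans ht.1)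
  have hfall :
      ∫ t in (k + 1 : ℝ)..(k + 1) + j, g t ≤ ∑ i ∈ Finset.range j, g ((k + 1 + i : ℕ)) := by
    convert (hanti.mono fun t ht ↦ hk'.trans ht.1).integral_le_sum using 3 with i
    push_cast; ring
  have hsplit : (∫ t in (0 : ℝ)..k, g t) + (∫ t in (k : ℝ)..k + 1, g t)
      + ∫ t in (k + 1 : ℝ)..(k + 1) + j, g t = ∫ t in (0 : ℝ)..(k + 1 + j : ℕ), g t := by
    simp only [intervalIntegral.integral_add_adjacent_intervals (hg.intervalIntegrable _ _)
      (hg.intervalIntegrable _ _)]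
    push_cast; ring_nf
  rw [Finset.sum_range_add, Finset.sum_range_succ']
  push_cast at *
  linarith

theorem abs_tsum_sub_le_of_unimodal (hg : Continuous g) (hg0 : ∀ i : ℕ, 0 ≤ g i) (hc : 0 ≤ c)
    (hmono : MonotoneOn g (Icc 0 c)) (hanti : AntitoneOn g (Ici c)) {I : ℝ}
    (hI : Tendsto (fun n : ℕ ↦ ∫ t in (0 : ℝ)..n, g t) atTop (𝓝 I)) :
    |∑' i : ℕ, g i - I| ≤ g c := by
  set k := ⌊c⌋₊
  have hI' : Tendsto (fun j : ℕ ↦ ∫ t in (0 : ℝ)..(k + 1 + j : ℕ), g t) atTop (𝓝 I) :=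
    hI.comp (tendsto_atTop_mono (fun j ↦ Nat.le_add_left j (k + 1)) tendsto_id)
  obtain ⟨B, hB⟩ := hI'.isBoundedUnder_le.bddAbove_range
  have hsum : Summable fun i : ℕ ↦ g i := by
    refine summable_of_sum_range_le hg0 (c := B + g c) fun n ↦ ?_
    calc ∑ i ∈ Finset.range n, g i ≤ ∑ i ∈ Finset.range (k + 2 + n), g i :=
          Finset.sum_le_sum_of_subset_of_nonneg (Finset.range_mono (by omega)) fun i _ _ ↦ hg0 i
      _ ≤ (∫ t in (0 : ℝ)..(k + 1 + n : ℕ), g t) + g c :=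
          sum_range_le_intervalIntegral_add_of_unimodal hg hc hmono hanti n
      _ ≤ B + g c := by gcongr; exact hB ⟨n, rfl⟩
  have hS : ∀ m, Tendsto (fun j ↦ ∑ i ∈ Finset.range (m + j), g i) atTop (𝓝 (∑' i : ℕ, g i)) :=
    fun m ↦ hsum.hasSum.tendsto_sum_nat.comp (tendsto_atTop_mono (Nat.le_add_left · m) tendsto_id)
  have hupper : ∑' i : ℕ, g i ≤ I + g c := le_of_tendsto_of_tendsto' (hS (k + 2)) (hI'.add_const _)
    (sum_range_le_intervalIntegral_add_of_unimodal hg hc hmono hanti)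
  have hlower : I ≤ ∑' i : ℕ, g i + g c := le_of_tendsto_of_tendsto' hI' ((hS (k + 1)).add_const _)
    (intervalIntegral_le_sum_range_add_of_unimodal hg (by simpa using hg0 0) hc hmono hanti)
  rw [abs_sub_le_iff]
  constructor <;> linarith

end Unimodal

section GeometricSampling

variable {q x : ℝ}

lemma summable_powExpNeg_succ_geometric (k : ℕ) (hx : 0 ≤ x) (hq0 : 0 ≤ q) (hq1 : q < 1) :
    Summable fun j : ℕ ↦ powExpNeg (k + 1) (x * q ^ j) := by
  refine .of_nonneg_of_le (fun j ↦ powExpNeg_nonneg _ (by positivity)) (fun j ↦ ?_)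
    ((summable_geometric_of_lt_one (by positivity) (pow_lt_one₀ hq0 hq1 k.succ_ne_zero)).mul_left
      (x ^ (k + 1)))
  calc powExpNeg (k + 1) (x * q ^ j) ≤ (x * q ^ j) ^ (k + 1) :=
        mul_le_of_le_one_right (by positivity) (exp_le_one_iff.2 (neg_nonpos.2 (by positivity)))
    _ = x ^ (k + 1) * (q ^ (k + 1)) ^ j := by ring

lemma intervalIntegral_powExpNeg_succ_geometric (m : ℕ) (hq0 : 0 < q) (hq1 : q ≠ 1) (T : ℝ) :
    ∫ t in (0 : ℝ)..T, powExpNeg (m + 1) (x * q ^ t)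
      = (∫ u in x * q ^ T..x, powExpNeg m u) / -log q := by
  have hderiv (t : ℝ) : HasDerivAt (fun t ↦ x * q ^ t) (x * (q ^ t * log q)) t :=
    (hasStrictDerivAt_const_rpow hq0 t).hasDerivAt.const_mul x
  have hcont : Continuous fun t : ℝ ↦ x * (q ^ t * log q) :=
    ((continuous_const_rpow hq0.ne').mul continuous_const).const_mul x
  have key := intervalIntegral.integral_comp_mul_deriv (a := 0) (b := T)
    (fun t _ ↦ hderiv t) hcont.continuousOn (continuous_powExpNeg m)
  have hintegrand (t : ℝ) : (powExpNeg m ∘ fun t ↦ x * q ^ t) t * (x * (q ^ t * log q))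
      = log q * powExpNeg (m + 1) (x * q ^ t) := by
    simp only [Function.comp, powExpNeg_succ]; ring
  simp only [hintegrand, intervalIntegral.integral_const_mul, rpow_zero, mul_one] at key
  rw [intervalIntegral.integral_symm x (x * q ^ T), ← key]
  field_simp [log_ne_zero_of_pos_of_ne_one hq0 hq1]

lemma tendsto_intervalIntegral_powExpNeg_succ_geometric (m : ℕ) (hq0 : 0 < q) (hq1 : q < 1) :
    Tendsto (fun n : ℕ ↦ ∫ t in (0 : ℝ)..n, powExpNeg (m + 1) (x * q ^ t)) atTop
      (𝓝 ((∫ u in (0 : ℝ)..x, powExpNeg m u) / -log q)) := by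
  simp_rw [intervalIntegral_powExpNeg_succ_geometric m hq0 hq1.ne, rpow_natCast]
  refine Tendsto.div_const ?_ _
  have hzero : Tendsto (fun n : ℕ ↦ x * q ^ n) atTop (𝓝 0) := by
    simpa using (tendsto_pow_atTop_nhds_zero_of_lt_one hq0.le hq1).const_mul x
  have hprim := ((intervalIntegral.continuous_primitive (μ := volume)
    (fun a b ↦ (continuous_powExpNeg m).intervalIntegrable a b) x).tendsto 0).comp hzero
  simpa only [Function.comp_def, ← intervalIntegral.integral_symm] using hprim.neg

theorem abs_tsum_powExpNeg_succ_geometric_sub_le (m : ℕ) (hq0 : 0 < q) (hq1 : q < 1)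
    (hx : m + 1 ≤ x) :
    |∑' j : ℕ, powExpNeg (m + 1) (x * q ^ j) - (∫ u in (0 : ℝ)..x, powExpNeg m u) / -log q|
      ≤ powExpNeg (m + 1) (m + 1) := by
  have hx0 : 0 < x := by linarith [(m.cast_nonneg : (0 : ℝ) ≤ m)]
  set c := logb q ((m + 1) / x)
  have hc : 0 ≤ c :=
    logb_nonneg_of_base_lt_one hq0 hq1 (by positivity) ((div_le_one hx0).2 hx)
  have hpeak : x * q ^ c = m + 1 := by
    rw [rpow_logb hq0 hq1.ne (by positivity)]; field_simp
  have hdecay : Antitone fun t : ℝ ↦ x * q ^ t := fun s t hst ↦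
    mul_le_mul_of_nonneg_left (rpow_le_rpow_of_exponent_ge hq0 hq1.le hst) hx0.le
  have hmono : MonotoneOn (fun t ↦ powExpNeg (m + 1) (x * q ^ t)) (Icc 0 c) :=
    (antitoneOn_powExpNeg_succ m).comp (hdecay.antitoneOn _) fun t ht ↦
      mem_Ici.2 (hpeak ▸ hdecay ht.2)
  have hanti : AntitoneOn (fun t ↦ powExpNeg (m + 1) (x * q ^ t)) (Ici c) :=
    (monotoneOn_powExpNeg_succ m).comp_AntitoneOn (hdecay.antitoneOn _) fun t ht ↦
      ⟨by positivity, hpeak ▸ hdecay ht⟩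
  have hcont : Continuous fun t : ℝ ↦ powExpNeg (m + 1) (x * q ^ t) :=
    (continuous_powExpNeg _).comp (continuous_const.mul (continuous_const_rpow hq0.ne'))
  have h := abs_tsum_sub_le_of_unimodal hcont
    (fun i ↦ powExpNeg_nonneg (m + 1) (u := x * q ^ (i : ℝ)) (by positivity))
    hc hmono hanti (tendsto_intervalIntegral_powExpNeg_succ_geometric m hq0 hq1)
  simp only [rpow_natCast] at h
  rwa [hpeak] at h

end GeometricSampling

lemma le_liminf_le_limsup_le_of_abs_sub_le {ι : Type*} {l : Filter ι} [l.NeBot] {u c : ι → ℝ}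
    {a C E : ℝ} (hc : Tendsto c l (𝓝 C)) (hu : ∀ᶠ i in l, |u i - c i| ≤ E)
    (ha : ∀ᶠ i in l, a ≤ u i) :
    max a (C - E) ≤ liminf u l ∧ liminf u l ≤ limsup u l ∧ limsup u l ≤ C + E := by
  have hup : ∀ᶠ i in l, u i ≤ c i + E := hu.mono fun i h ↦ by linarith [le_abs_self (u i - c i)]
  have hlow : ∀ᶠ i in l, c i - E ≤ u i := hu.mono fun i h ↦ by linarith [neg_abs_le (u i - c i)]
  have hbddAbove : IsBoundedUnder (· ≤ ·) l u := (hc.add_const E).isBoundedUnder_le.mono_le hup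
  have hbddBelow : IsBoundedUnder (· ≥ ·) l u := (hc.sub_const E).isBoundedUnder_ge.mono_ge hlow
  refine ⟨max_le (le_liminf_of_le hbddAbove.isCoboundedUnder_ge ha) ?_,
    liminf_le_limsup hbddAbove hbddBelow, ?_⟩
  · rw [← (hc.sub_const E).liminf_eq]
    exact liminf_le_liminf hlow (hc.sub_const E).isBoundedUnder_ge hbddAbove.isCoboundedUnder_ge
  · rw [← (hc.add_const E).limsup_eq]
    exact limsup_le_limsup hup hbddBelow.isCoboundedUnder_le (hc.add_const E).isBoundedUnder_le

lemma add_one_mul_add_div_factorial_le {a b : ℝ} (ha : 0 ≤ a) (hb : 0 ≤ b) (r : ℕ) :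
    ((r + 1) * a + b) / r ! ≤ 2 * a + 2 * b := by
  have hr : (r + 1 : ℝ) ≤ 2 * r ! := by
    rcases r with _ | r
    · norm_num
    · exact_mod_cast (show r + 1 + 1 ≤ 2 * (r + 1).factorial by
        linarith [Nat.self_le_factorial (r + 1), Nat.factorial_pos (r + 1)])
  have hfac : (1 : ℝ) ≤ r ! := by exact_mod_cast r.factorial_pos
  rw [div_le_iff₀ (by positivity)]
  nlinarith

lemma s2_nonneg {p : ℕ → ℝ} (hp : ∀ ℓ, 0 ≤ p ℓ) (r n : ℕ) : 0 ≤ s2 p r n :=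
  tsum_nonneg fun ℓ ↦ by have := hp ℓ; positivity

section FixedGeometric

variable {p : ℝ}

lemma fixedGeomPMF_nonneg (hp0 : 0 ≤ p) (hp1 : p ≤ 1) (ℓ : ℕ) : 0 ≤ fixedGeomPMF p ℓ := by
  unfold fixedGeomPMF
  split_ifs
  · exact le_rfl
  · exact mul_nonneg hp0 (pow_nonneg (by linarith) _)

lemma s2_fixedGeomPMF_eq (hp0 : 0 < p) (hp1 : p < 1) (r n : ℕ) :
    s2 (fixedGeomPMF p) r n = ((r + 1) * ∑' j : ℕ, powExpNeg (r + 1) (n * p * (1 - p) ^ j)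
      + ∑' j : ℕ, powExpNeg (r + 2) (n * p * (1 - p) ^ j)) / r ! := by
  have hs1 := summable_powExpNeg_succ_geometric r (x := n * p) (q := 1 - p) (by positivity)
    (by linarith) (by linarith)
  have hs2 := summable_powExpNeg_succ_geometric (r + 1) (x := n * p) (q := 1 - p) (by positivity)
    (by linarith) (by linarith)
  have hterm (j : ℕ) : ((r : ℝ) + 1 + n * fixedGeomPMF p (j + 1))
      * exp (-(n * fixedGeomPMF p (j + 1))) * (n * fixedGeomPMF p (j + 1)) ^ (r + 1) / (r ! : ℝ)
      = ((r + 1) * powExpNeg (r + 1) (n * p * (1 - p) ^ j)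
        + powExpNeg (r + 2) (n * p * (1 - p) ^ j)) / r ! := by
    simp only [fixedGeomPMF, Nat.succ_ne_zero, if_false, Nat.add_sub_cancel, powExpNeg]
    ring_nf
  rw [s2, tsum_eq_zero_add' ?_]
  · simp only [hterm]
    simp only [fixedGeomPMF, if_true, mul_zero, zero_pow (Nat.succ_ne_zero r), zero_div,
      zero_add]
    rw [tsum_div_const, Summable.tsum_add (hs1.mul_left _) hs2, tsum_mul_left]
  · simp only [hterm]
    exact ((hs1.mul_left _).add hs2).div_const _

lemma abs_s2_fixedGeomPMF_sub_le (hp0 : 0 < p) (hp1 : p < 1) {r n : ℕ} (hn : r + 2 ≤ n * p) :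
    |s2 (fixedGeomPMF p) r n - ((r + 1) * (∫ u in (0 : ℝ)..n * p, powExpNeg r u)
        + ∫ u in (0 : ℝ)..n * p, powExpNeg (r + 1) u) / (-log (1 - p) * r !)|
      ≤ ((r + 1) * powExpNeg (r + 1) (r + 1) + powExpNeg (r + 2) (r + 2)) / r ! := by
  have hlog : log (1 - p) ≠ 0 := (log_neg (by linarith) (by linarith)).ne
  have h1 := abs_tsum_powExpNeg_succ_geometric_sub_le r (x := n * p) (q := 1 - p) (by linarith)
    (by linarith) (by linarith)
  have h2 := abs_tsum_powExpNeg_succ_geometric_sub_le (r + 1) (x := n * p) (q := 1 - p)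
    (by linarith) (by linarith) (by push_cast; linarith)
  rw [show ((r + 1 : ℕ) : ℝ) + 1 = r + 2 by push_cast; ring] at h2
  rw [s2_fixedGeomPMF_eq hp0 hp1]
  set S₁ := ∑' j : ℕ, powExpNeg (r + 1) (n * p * (1 - p) ^ j)
  set S₂ := ∑' j : ℕ, powExpNeg (r + 2) (n * p * (1 - p) ^ j)
  set J₁ := ∫ u in (0 : ℝ)..n * p, powExpNeg r u
  set J₂ := ∫ u in (0 : ℝ)..n * p, powExpNeg (r + 1) u
  have hsplit : ((r + 1) * S₁ + S₂) / (r ! : ℝ) - ((r + 1) * J₁ + J₂) / (-log (1 - p) * r !)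
      = ((r + 1) * (S₁ - J₁ / -log (1 - p)) + (S₂ - J₂ / -log (1 - p))) / r ! := by
    field_simp
    ring
  rw [hsplit, abs_div, Nat.abs_cast]
  refine div_le_div_of_nonneg_right ((abs_add_le _ _).trans (add_le_add ?_ h2)) (by positivity)
  rw [abs_mul, abs_of_pos (by positivity)]
  gcongr

end FixedGeometric

/-- bounds on `liminf`/`limsup` of `s²_{r,n}` for the fixed geometric
distribution with parameter `p ∈ (0,1)`, where `a = -1/log(1-p)`. -/
theorem s2_bounds_fixed_geometric (p : ℝ) (hp0 : 0 < p) (hp1 : p < 1) (r : ℕ) :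
    2 * max 0 ((-1 / Real.log (1 - p)) * ((r : ℝ) + 1)
        - ((r : ℝ) + 1) ^ (r + 1) * Real.exp (-((r : ℝ) + 1))
        - ((r : ℝ) + 2) ^ (r + 2) * Real.exp (-((r : ℝ) + 2)))
      ≤ liminf (fun n : ℕ => s2 (fixedGeomPMF p) r n) atTop ∧
    liminf (fun n : ℕ => s2 (fixedGeomPMF p) r n) atTop
      ≤ limsup (fun n : ℕ => s2 (fixedGeomPMF p) r n) atTop ∧
    limsup (fun n : ℕ => s2 (fixedGeomPMF p) r n) atTop
      ≤ 2 * (-1 / Real.log (1 - p)) * ((r : ℝ) + 1)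
        + 2 * ((r : ℝ) + 1) ^ (r + 1) * Real.exp (-((r : ℝ) + 1))
        + 2 * ((r : ℝ) + 2) ^ (r + 2) * Real.exp (-((r : ℝ) + 2)) := by
  set L := -log (1 - p)
  have hL : 0 < L := neg_pos.2 (log_neg (by linarith) (by linarith))
  have hnp : Tendsto (fun n : ℕ ↦ (n : ℝ) * p) atTop atTop :=
    tendsto_natCast_atTop_atTop.atTop_mul_const hp0
  have hcenter : Tendsto (fun n : ℕ ↦ ((r + 1) * (∫ u in (0 : ℝ)..n * p, powExpNeg r u)
      + ∫ u in (0 : ℝ)..n * p, powExpNeg (r + 1) u) / (L * r !)) atTop (𝓝 (2 * (r + 1) / L)) := by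
    have h := ((((tendsto_intervalIntegral_powExpNeg r).const_mul ((r : ℝ) + 1)).add
      (tendsto_intervalIntegral_powExpNeg (r + 1))).comp hnp).div_const (L * r !)
    rwa [Nat.factorial_succ, Nat.cast_mul, Nat.cast_succ, ← add_mul, ← two_mul,
      mul_div_mul_right _ _ (by positivity)] at h
  obtain ⟨hlower, hmid, hupper⟩ := le_liminf_le_limsup_le_of_abs_sub_le hcenter
    ((hnp.eventually_ge_atTop (r + 2)).mono fun n hn ↦ abs_s2_fixedGeomPMF_sub_le hp0 hp1 hn)
    (.of_forall fun n ↦ s2_nonneg (fixedGeomPMF_nonneg hp0.le hp1.le) r n)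
  have herr := add_one_mul_add_div_factorial_le
    (powExpNeg_nonneg (r + 1) (by positivity : (0 : ℝ) ≤ r + 1))
    (powExpNeg_nonneg (r + 2) (by positivity : (0 : ℝ) ≤ r + 2)) r
  have hC : 2 * ((r : ℝ) + 1) / L = 2 * (-1 / log (1 - p)) * (r + 1) := by
    rw [neg_div, ← div_neg]; ring
  simp only [powExpNeg] at herr hlower hupper
  refine ⟨le_trans ?_ hlower, hmid, hupper.trans (by rw [hC]; linarith)⟩
  rw [mul_max_of_nonneg _ _ (zero_le_two : (0 : ℝ) ≤ 2), mul_zero]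
  exact max_le_max le_rfl (by rw [hC]; linarith)
end
end

section
/- Let a_n > 0 with a_n → a ∈ [0, ∞) as n → ∞, and fix η > 0. Then a Γ(η) − 2 e^{−η} η^η ≤ liminf_{n→∞} Σ_{ℓ=1}^∞ h_{n,η}(ℓ) ≤ limsup_{n→∞} Σ_{ℓ=1}^∞ h_{n,η}(ℓ) ≤ a Γ(η) + 2 e^{−η} η^η, where Γ is the Gamma function. -/
open MeasureTheory ProbabilityTheory Filter Topology
open scoped NNReal

noncomputable section

namespace ThmAux
open Set Real

noncomputable def g (η t : ℝ) : ℝ := Real.exp (-t) * t ^ η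

lemma g_nonneg {η : ℝ} {t : ℝ} (ht : 0 ≤ t) : 0 ≤ g η t :=
  mul_nonneg (Real.exp_pos _).le (Real.rpow_nonneg ht _)

lemma g_pos_eq {η t : ℝ} (ht : 0 < t) : g η t = Real.exp (η * Real.log t - t) := by
  rw [g, Real.rpow_def_of_pos ht, ← Real.exp_add]; ring_nf

lemma g_le_g {η s t : ℝ} (hs : 0 < s) (ht : 0 < t)
    (h : η * Real.log s - s ≤ η * Real.log t - t) : g η s ≤ g η t := by
  rw [g_pos_eq hs, g_pos_eq ht]; exact Real.exp_le_exp.2 h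

lemma g_le_max {η t : ℝ} (hη : 0 < η) (ht : 0 ≤ t) : g η t ≤ g η η := by
  rcases eq_or_lt_of_le ht with h | h
  · rw [g, ← h, Real.zero_rpow hη.ne', mul_zero]
    exact g_nonneg hη.le
  · refine g_le_g h hη ?_
    have hl : Real.log (t / η) ≤ t / η - 1 := Real.log_le_sub_one_of_pos (div_pos h hη)
    rw [Real.log_div h.ne' hη.ne'] at hl
    have := mul_le_mul_of_nonneg_left hl hη.le
    have ht' : η * (t / η - 1) = t - η := by field_simp
    nlinarith

lemma g_mono {η s t : ℝ} (hη : 0 < η) (hs : 0 < s) (hst : s ≤ t) (htη : t ≤ η) :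
    g η s ≤ g η t := by
  have ht : 0 < t := lt_of_lt_of_le hs hst
  refine g_le_g hs ht ?_
  have hl : Real.log (s / t) ≤ s / t - 1 := Real.log_le_sub_one_of_pos (div_pos hs ht)
  rw [Real.log_div hs.ne' ht.ne'] at hl
  have h2 := mul_le_mul_of_nonneg_left hl hη.le
  have h3 : η * (s / t - 1) ≤ s - t := by
    rw [div_sub_one ht.ne', mul_div_assoc', div_le_iff₀ ht]
    nlinarith
  nlinarith

lemma g_anti {η s t : ℝ} (hη : 0 < η) (hηs : η ≤ s) (hst : s ≤ t) :
    g η t ≤ g η s := by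
  have hs : 0 < s := lt_of_lt_of_le hη hηs
  have ht : 0 < t := lt_of_lt_of_le hs hst
  refine g_le_g ht hs ?_
  have hl : Real.log (t / s) ≤ t / s - 1 := Real.log_le_sub_one_of_pos (div_pos ht hs)
  rw [Real.log_div ht.ne' hs.ne'] at hl
  have h2 := mul_le_mul_of_nonneg_left hl hη.le
  have h3 : η * (t / s - 1) ≤ t - s := by
    rw [div_sub_one hs.ne', mul_div_assoc', div_le_iff₀ hs]
    nlinarith
  nlinarith

noncomputable def H (a c η : ℝ) (x : ℝ) : ℝ := g η (c * Real.exp (-x / a))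

variable {a c η : ℝ}

lemma phi_pos (hc : 0 < c) (x : ℝ) : 0 < c * Real.exp (-x / a) :=
  mul_pos hc (Real.exp_pos _)

lemma phi_anti (ha : 0 < a) (hc : 0 < c) : StrictAnti (fun x => c * Real.exp (-x / a)) := by
  intro x y hxy
  have h : -y / a < -x / a := by
    apply div_lt_div_of_pos_right (by linarith) ha
  simpa using mul_lt_mul_of_pos_left (Real.exp_lt_exp.2 h) hc

lemma H_cont (hη : 0 < η) : Continuous (H a c η) := by
  have hφ : Continuous fun x : ℝ => c * Real.exp (-x / a) :=
    continuous_const.mul (Real.continuous_exp.comp ((continuous_id.neg).div_const a))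
  exact (Real.continuous_exp.comp hφ.neg).mul (hφ.rpow_const fun x => Or.inr hη.le)

lemma H_nonneg (hc : 0 < c) (x : ℝ) : 0 ≤ H a c η x := g_nonneg (phi_pos hc x).le

lemma H_le (hc : 0 < c) (hη : 0 < η) (x : ℝ) : H a c η x ≤ g η η :=
  g_le_max hη (phi_pos hc x).le


noncomputable def x0 (a c η : ℝ) : ℝ := if c ≤ η then 0 else a * Real.log (c / η)

lemma x0_nonneg (ha : 0 < a) (hη : 0 < η) : 0 ≤ x0 a c η := by
  rw [x0]; split
  · exact le_refl _
  · next h =>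
    push_neg at h
    exact mul_nonneg ha.le (Real.log_nonneg ((one_le_div hη).2 h.le))

lemma phi_x0 (ha : 0 < a) (hη : 0 < η) (h : η < c) :
    c * Real.exp (-(a * Real.log (c / η)) / a) = η := by
  have hc : 0 < c := lt_trans hη h
  rw [neg_div, mul_div_cancel_left₀ _ ha.ne', Real.exp_neg,
    Real.exp_log (div_pos hc hη)]
  field_simp

lemma H_monoOn (ha : 0 < a) (hc : 0 < c) (hη : 0 < η) :
    MonotoneOn (H a c η) (Icc 0 (x0 a c η)) := by
  intro x hx y hy hxy
  by_cases hcη : c ≤ η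
  · rw [x0, if_pos hcη] at hx hy
    have hx0 : x = 0 := le_antisymm hx.2 hx.1
    have hy0 : y = 0 := le_antisymm hy.2 hy.1
    rw [hx0, hy0]
  · push_neg at hcη
    rw [x0, if_neg (not_le.2 hcη)] at hx hy
    have h1 : c * Real.exp (-y / a) ≤ c * Real.exp (-x / a) :=
      (phi_anti ha hc).antitone hxy
    have h2 : η ≤ c * Real.exp (-y / a) := by
      have := (phi_anti ha hc).antitone hy.2
      rwa [phi_x0 ha hη hcη] at this
    exact g_anti hη h2 h1

lemma H_antiOn (ha : 0 < a) (hc : 0 < c) (hη : 0 < η) :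
    AntitoneOn (H a c η) (Ici (x0 a c η)) := by
  intro x hx y hy hxy
  have h1 : c * Real.exp (-y / a) ≤ c * Real.exp (-x / a) :=
    (phi_anti ha hc).antitone hxy
  have h2 : c * Real.exp (-x / a) ≤ η := by
    by_cases hcη : c ≤ η
    · rw [x0, if_pos hcη] at hx
      calc c * Real.exp (-x / a) ≤ c * Real.exp (-0 / a) :=
            (phi_anti ha hc).antitone hx
        _ = c := by simp
        _ ≤ η := hcη
    · push_neg at hcη
      rw [x0, if_neg (not_le.2 hcη)] at hx
      have := (phi_anti ha hc).antitone hx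
      rwa [phi_x0 ha hη hcη] at this
  exact g_mono hη (phi_pos hc y) h1 h2


lemma image_phi (ha : 0 < a) (hc : 0 < c) :
    (fun x => c * Real.exp (-x / a)) '' Ioi 0 = Ioo 0 c := by
  ext t
  simp only [mem_image, mem_Ioi, mem_Ioo]
  constructor
  · rintro ⟨x, hx, rfl⟩
    refine ⟨phi_pos hc x, ?_⟩
    have : Real.exp (-x / a) < 1 := by
      apply Real.exp_lt_one_iff.2
      rw [neg_div]
      exact neg_neg_iff_pos.2 (div_pos hx ha)
    exact mul_lt_of_lt_one_right hc this
  · rintro ⟨ht0, htc⟩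
    refine ⟨a * Real.log (c / t), ?_, phi_x0 ha ht0 htc⟩
    exact mul_pos ha (Real.log_pos ((one_lt_div ht0).2 htc))

lemma phi_deriv (ha : 0 < a) :
    ∀ x ∈ Ioi (0:ℝ), HasDerivWithinAt (fun x => c * Real.exp (-x / a))
      (c * (Real.exp (-x / a) * (-1 / a))) (Ioi 0) x := by
  intro x _
  exact (((hasDerivAt_id x).neg.div_const a).exp.const_mul c).hasDerivWithinAt

lemma key_pt (ha : 0 < a) (hc : 0 < c) (η x : ℝ) :
    |c * (Real.exp (-x / a) * (-1 / a))| •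
      (a * (Real.exp (-(c * Real.exp (-x / a))) * (c * Real.exp (-x / a)) ^ (η - 1)))
      = H a c η x := by
  have hφ : 0 < c * Real.exp (-x / a) := phi_pos hc x
  have h1 : (0:ℝ) < c * Real.exp (-x / a) * (1 / a) := by positivity
  have h2 : c * (Real.exp (-x / a) * (-1 / a)) = -(c * Real.exp (-x / a) * (1 / a)) := by ring
  rw [smul_eq_mul, abs_of_nonpos (by linarith), H, g,
    Real.rpow_sub_one hφ.ne']
  field_simp

lemma integrableOn_H (ha : 0 < a) (hc : 0 < c) (hη : 0 < η) :
    IntegrableOn (H a c η) (Ioi 0) := by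
  have hg : IntegrableOn (fun t => a * (Real.exp (-t) * t ^ (η - 1))) (Ioo 0 c) :=
    ((Real.GammaIntegral_convergent hη).mono_set Ioo_subset_Ioi_self).const_mul a
  rw [← image_phi ha hc] at hg
  rw [integrableOn_image_iff_integrableOn_abs_deriv_smul measurableSet_Ioi (phi_deriv ha)
    (phi_anti ha hc).injective.injOn] at hg
  exact hg.congr_fun (fun x _ => key_pt ha hc η x) measurableSet_Ioi

lemma integral_H (ha : 0 < a) (hc : 0 < c) (hη : 0 < η) :
    ∫ x in Ioi (0:ℝ), H a c η x = a * ∫ t in Ioo 0 c, Real.exp (-t) * t ^ (η - 1) := by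
  rw [← MeasureTheory.integral_const_mul, ← image_phi ha hc,
    MeasureTheory.integral_image_eq_integral_abs_deriv_smul measurableSet_Ioi (phi_deriv ha)
      (phi_anti ha hc).injective.injOn]
  exact setIntegral_congr_fun measurableSet_Ioi fun x _ => (key_pt ha hc η x).symm


lemma H_le_geom (ha : 0 < a) (hc : 0 < c) (hη : 0 < η) (ℓ : ℕ) :
    H a c η ((ℓ:ℝ) + 1) ≤ c ^ η * (Real.exp (-η / a)) ^ (ℓ + 1) := by
  have hφ : 0 < c * Real.exp (-((ℓ:ℝ) + 1) / a) := phi_pos hc _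
  have hb : H a c η ((ℓ:ℝ) + 1) ≤ (c * Real.exp (-((ℓ:ℝ) + 1) / a)) ^ η := by
    rw [H, g]
    exact mul_le_of_le_one_left (Real.rpow_nonneg hφ.le _)
      (Real.exp_le_one_iff.2 (by linarith))
  refine hb.trans (le_of_eq ?_)
  rw [Real.mul_rpow hc.le (Real.exp_pos _).le, ← Real.exp_mul, ← Real.exp_nat_mul]
  congr 1
  push_cast
  field_simp

lemma summable_H (ha : 0 < a) (hc : 0 < c) (hη : 0 < η) :
    Summable (fun ℓ : ℕ => H a c η ((ℓ:ℝ) + 1)) := by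
  have hr0 : (0:ℝ) ≤ Real.exp (-η / a) := (Real.exp_pos _).le
  have hr1 : Real.exp (-η / a) < 1 := Real.exp_lt_one_iff.2 (by
    rw [neg_div]; exact neg_neg_iff_pos.2 (div_pos hη ha))
  have hs : Summable (fun ℓ : ℕ => c ^ η * Real.exp (-η / a) ^ (ℓ + 1)) := by
    simp_rw [pow_succ, mul_comm (Real.exp (-η / a) ^ _), ← mul_assoc]
    exact (summable_geometric_of_lt_one hr0 hr1).mul_left _
  exact Summable.of_nonneg_of_le (fun ℓ => H_nonneg hc _) (H_le_geom ha hc hη) hs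


lemma reindex (f : ℕ → ℝ) (m n : ℕ) :
    ∑ i ∈ Finset.Ico (m+1) (n+1), f i = ∑ i ∈ Finset.Ico m n, f (i+1) := by
  rw [← Finset.map_add_right_Ico, Finset.sum_map]
  rfl

lemma sum_le_upper (ha : 0 < a) (hc : 0 < c) (hη : 0 < η) {k N : ℕ} (hk1 : 1 ≤ k)
    (hkx : x0 a c η ≤ (k:ℝ)) (hk1x : ((k:ℝ)) - 1 ≤ x0 a c η) (hN : k ≤ N) :
    ∑ m ∈ Finset.Ico 1 (N+1), H a c η (m:ℕ)
      ≤ (∫ x in Ioi (0:ℝ), H a c η x) + 2 * g η η := by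
  have hcast : ((k-1 : ℕ) : ℝ) = (k:ℝ) - 1 := by
    push_cast [Nat.cast_sub hk1]; ring
  have hnn : ∀ m : ℕ, 0 ≤ H a c η (m:ℕ) := fun m => H_nonneg hc _
  -- split the sum
  rw [← Finset.sum_Ico_consecutive _ (by omega : 1 ≤ k+1) (by omega : k+1 ≤ N+1)]
  -- first part
  have h1 : ∑ m ∈ Finset.Ico 1 (k+1), H a c η (m:ℕ)
      ≤ (∫ x in (0:ℕ)..(k-1:ℕ), H a c η x) + 2 * g η η := by
    have hsub : Finset.Ico 1 (k+1) ⊆ Finset.Ico 0 (k-1) ∪ {k-1, k} := by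
      intro m hm
      simp only [Finset.mem_Ico, Finset.mem_union, Finset.mem_insert,
        Finset.mem_singleton] at *
      omega
    have hdisj : Disjoint (Finset.Ico 0 (k-1)) ({k-1, k} : Finset ℕ) := by
      simp only [Finset.disjoint_left, Finset.mem_Ico, Finset.mem_insert,
        Finset.mem_singleton]
      omega
    calc ∑ m ∈ Finset.Ico 1 (k+1), H a c η (m:ℕ)
        ≤ ∑ m ∈ Finset.Ico 0 (k-1) ∪ {k-1, k}, H a c η (m:ℕ) :=
          Finset.sum_le_sum_of_subset_of_nonneg hsub (fun m _ _ => hnn m)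
      _ = ∑ m ∈ Finset.Ico 0 (k-1), H a c η (m:ℕ)
            + ∑ m ∈ ({k-1, k} : Finset ℕ), H a c η (m:ℕ) := Finset.sum_union hdisj
      _ ≤ (∫ x in (0:ℕ)..(k-1:ℕ), H a c η x) + 2 * g η η := by
          gcongr
          · refine MonotoneOn.sum_le_integral_Ico (Nat.zero_le _) ?_
            refine (H_monoOn ha hc hη).mono ?_
            rw [Nat.cast_zero, hcast]
            exact Icc_subset_Icc le_rfl hk1x
          · rw [Finset.sum_pair (by omega : k - 1 ≠ k)]
            have := H_le (a := a) hc hη ((k-1 : ℕ) : ℝ)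
            have := H_le (a := a) hc hη ((k : ℕ) : ℝ)
            linarith
  -- second part
  have h2 : ∑ m ∈ Finset.Ico (k+1) (N+1), H a c η (m:ℕ)
      ≤ ∫ x in (k:ℕ)..(N:ℕ), H a c η x := by
    rw [reindex (fun m => H a c η (m:ℕ)) k N]
    refine AntitoneOn.sum_le_integral_Ico hN ?_
    exact (H_antiOn ha hc hη).mono (fun x hx => le_trans hkx hx.1)
  -- combine: the two integrals fit inside the integral over Ioi 0
  have h3 : (∫ x in (0:ℕ)..(k-1:ℕ), H a c η x) + (∫ x in (k:ℕ)..(N:ℕ), H a c η x)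
      ≤ ∫ x in Ioi (0:ℝ), H a c η x := by
    have hint := integrableOn_H ha hc hη
    have hab : ((0:ℕ):ℝ) ≤ ((k-1:ℕ):ℝ) := Nat.cast_le.2 (Nat.zero_le _)
    have hkN : ((k:ℕ):ℝ) ≤ ((N:ℕ):ℝ) := Nat.cast_le.2 hN
    rw [intervalIntegral.integral_of_le hab, intervalIntegral.integral_of_le hkN]
    have hdisj : Disjoint (Ioc ((0:ℕ):ℝ) ((k-1:ℕ):ℝ)) (Ioc ((k:ℕ):ℝ) ((N:ℕ):ℝ)) := by
      rw [Set.disjoint_left]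
      rintro x ⟨_, hx2⟩ ⟨hx3, _⟩
      rw [hcast] at hx2
      linarith
    have hsub : Ioc ((0:ℕ):ℝ) ((k-1:ℕ):ℝ) ∪ Ioc ((k:ℕ):ℝ) ((N:ℕ):ℝ) ⊆ Ioi (0:ℝ) := by
      intro x hx
      rcases hx with hx | hx
      · simpa using hx.1
      · have : (0:ℝ) < (k:ℕ) := by exact_mod_cast hk1
        exact mem_Ioi.2 (lt_trans this hx.1)
    rw [← MeasureTheory.setIntegral_union hdisj measurableSet_Ioc
      (hint.mono_set (fun x hx => (mem_union_left _ hx) |> hsub))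
      (hint.mono_set (fun x hx => hsub (mem_union_right _ hx)))]
    · refine setIntegral_mono_set hint ?_ (HasSubset.Subset.eventuallyLE hsub)
      exact Filter.Eventually.of_forall (fun x => H_nonneg hc x)
  linarith


lemma lower_sum (ha : 0 < a) (hc : 0 < c) (hη : 0 < η) {k N : ℕ} (hk1 : 1 ≤ k)
    (hkx : x0 a c η ≤ (k:ℝ)) (hk1x : ((k:ℝ)) - 1 ≤ x0 a c η) (hN : k ≤ N) :
    (∫ x in ((0:ℕ):ℝ)..((N+1:ℕ):ℝ), H a c η x) - 2 * g η η
      ≤ ∑ m ∈ Finset.Ico 1 (N+1), H a c η (m:ℕ) := by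
  have hcast : ((k-1 : ℕ) : ℝ) = (k:ℝ) - 1 := by
    push_cast [Nat.cast_sub hk1]; ring
  have hii : ∀ u v : ℝ, IntervalIntegrable (H a c η) volume u v :=
    fun u v => (H_cont hη).intervalIntegrable u v
  -- integral split
  have hsplit : (∫ x in ((0:ℕ):ℝ)..((N+1:ℕ):ℝ), H a c η x)
      = (∫ x in ((0:ℕ):ℝ)..((k-1:ℕ):ℝ), H a c η x)
        + (∫ x in ((k-1:ℕ):ℝ)..((k+1:ℕ):ℝ), H a c η x)
        + (∫ x in ((k+1:ℕ):ℝ)..((N+1:ℕ):ℝ), H a c η x) := by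
    rw [intervalIntegral.integral_add_adjacent_intervals (hii _ _) (hii _ _),
      intervalIntegral.integral_add_adjacent_intervals (hii _ _) (hii _ _)]
  -- middle bound
  have hmid : (∫ x in ((k-1:ℕ):ℝ)..((k+1:ℕ):ℝ), H a c η x) ≤ 2 * g η η := by
    have hle : ((k-1:ℕ):ℝ) ≤ ((k+1:ℕ):ℝ) := Nat.cast_le.2 (by omega)
    calc (∫ x in ((k-1:ℕ):ℝ)..((k+1:ℕ):ℝ), H a c η x)
        ≤ ∫ _ in ((k-1:ℕ):ℝ)..((k+1:ℕ):ℝ), g η η :=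
          intervalIntegral.integral_mono_on hle (hii _ _)
            (intervalIntegrable_const) (fun x _ => H_le hc hη x)
      _ = (((k+1:ℕ):ℝ) - ((k-1:ℕ):ℝ)) • g η η := intervalIntegral.integral_const _
      _ = 2 * g η η := by
          rw [hcast, smul_eq_mul]
          push_cast
          ring
  -- monotone part
  have h1 : (∫ x in ((0:ℕ):ℝ)..((k-1:ℕ):ℝ), H a c η x)
      ≤ ∑ m ∈ Finset.Ico 1 k, H a c η (m:ℕ) := by
    have := MonotoneOn.integral_le_sum_Ico (f := fun x => H a c η x)
      (Nat.zero_le (k-1)) (by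
        refine (H_monoOn ha hc hη).mono ?_
        rw [Nat.cast_zero, hcast]
        exact Icc_subset_Icc le_rfl hk1x)
    refine this.trans (le_of_eq ?_)
    have hk' : k - 1 + 1 = k := by omega
    rw [← reindex (fun m => H a c η (m:ℕ)) 0 (k-1)]
    norm_num [hk']
  -- antitone part
  have h2 : (∫ x in ((k+1:ℕ):ℝ)..((N+1:ℕ):ℝ), H a c η x)
      ≤ ∑ m ∈ Finset.Ico (k+1) (N+1), H a c η (m:ℕ) := by
    refine AntitoneOn.integral_le_sum_Ico (by omega) ?_
    refine (H_antiOn ha hc hη).mono (fun x hx => ?_)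
    refine le_trans hkx (le_trans ?_ hx.1)
    exact_mod_cast Nat.le_succ k
  -- sum split
  have hsum : ∑ m ∈ Finset.Ico 1 (N+1), H a c η (m:ℕ)
      = ∑ m ∈ Finset.Ico 1 k, H a c η (m:ℕ) + H a c η (k:ℕ)
        + ∑ m ∈ Finset.Ico (k+1) (N+1), H a c η (m:ℕ) := by
    rw [← Finset.sum_Ico_consecutive _ (by omega : 1 ≤ k+1) (by omega : k+1 ≤ N+1),
      Finset.sum_Ico_succ_top hk1]
  have := H_nonneg (a := a) (η := η) hc ((k:ℕ):ℝ)
  rw [hsplit, hsum]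
  linarith


lemma tsum_bounds (ha : 0 < a) (hc : 0 < c) (hη : 0 < η) :
    (∫ x in Ioi (0:ℝ), H a c η x) - 2 * g η η ≤ ∑' ℓ:ℕ, H a c η ((ℓ:ℝ)+1) ∧
    ∑' ℓ:ℕ, H a c η ((ℓ:ℝ)+1) ≤ (∫ x in Ioi (0:ℝ), H a c η x) + 2 * g η η := by
  set k : ℕ := max 1 ⌈x0 a c η⌉₊ with hkdef
  have hk1 : 1 ≤ k := le_max_left _ _
  have hkx : x0 a c η ≤ (k:ℝ) :=
    le_trans (Nat.le_ceil _) (Nat.cast_le.2 (le_max_right _ _))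
  have hk1x : ((k:ℝ)) - 1 ≤ x0 a c η := by
    by_cases h : ⌈x0 a c η⌉₊ ≤ 1
    · rw [hkdef, max_eq_left h]
      norm_num
      exact x0_nonneg ha hη
    · rw [hkdef, max_eq_right (le_of_not_ge h)]
      have := Nat.ceil_lt_add_one (x0_nonneg ha hη (c := c))
      linarith
  have hps : ∀ N : ℕ, ∑ ℓ ∈ Finset.range N, H a c η ((ℓ:ℝ)+1)
      = ∑ m ∈ Finset.Ico 1 (N+1), H a c η (m:ℕ) := by
    intro N
    rw [reindex (fun m => H a c η (m:ℕ)) 0 N, Finset.range_eq_Ico]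
    refine Finset.sum_congr rfl (fun i _ => ?_)
    push_cast
    ring_nf
  constructor
  · -- lower bound
    have hb : Tendsto (fun N : ℕ => ((N+1:ℕ):ℝ)) atTop atTop :=
      tendsto_natCast_atTop_atTop.comp (tendsto_add_atTop_nat 1)
    have htend : Tendsto (fun N : ℕ => (∫ x in (0:ℝ)..((N+1:ℕ):ℝ), H a c η x) - 2 * g η η)
        atTop (𝓝 ((∫ x in Ioi (0:ℝ), H a c η x) - 2 * g η η)) :=
      (MeasureTheory.intervalIntegral_tendsto_integral_Ioi 0
        (integrableOn_H ha hc hη) hb).sub_const _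
    refine le_of_tendsto htend ?_
    filter_upwards [eventually_ge_atTop k] with N hN
    have hlow := lower_sum ha hc hη hk1 hkx hk1x hN
    rw [Nat.cast_zero] at hlow
    refine hlow.trans ?_
    rw [← hps N]
    exact Summable.sum_le_tsum _ (fun ℓ _ => H_nonneg hc _) (summable_H ha hc hη)
  · -- upper bound
    refine Summable.tsum_le_of_sum_le (summable_H ha hc hη) (fun s => ?_)
    obtain ⟨N, hNs⟩ := s.exists_nat_subset_range
    have hsub : s ⊆ Finset.range (max N k) :=
      hNs.trans (Finset.range_subset_range.2 (le_max_left _ _))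
    calc ∑ ℓ ∈ s, H a c η ((ℓ:ℝ)+1)
        ≤ ∑ ℓ ∈ Finset.range (max N k), H a c η ((ℓ:ℝ)+1) :=
          Finset.sum_le_sum_of_subset_of_nonneg hsub (fun ℓ _ _ => H_nonneg hc _)
      _ = ∑ m ∈ Finset.Ico 1 (max N k + 1), H a c η (m:ℕ) := hps _
      _ ≤ (∫ x in Ioi (0:ℝ), H a c η x) + 2 * g η η :=
          sum_le_upper ha hc hη hk1 hkx hk1x (le_max_right _ _)

end ThmAux


/-- if `a_n > 0` and `a_n → a ∈ [0,∞)`, then for any `η > 0`,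
`a Γ(η) - 2 e^{-η} η^η ≤ liminf Σ_{ℓ=1}^∞ h_{n,η}(ℓ) ≤ limsup Σ_{ℓ=1}^∞ h_{n,η}(ℓ)
≤ a Γ(η) + 2 e^{-η} η^η`. -/
theorem tsum_hfun_bounds (a : ℕ → ℝ) (ha : ∀ n, 0 < a n)
    (A : ℝ) (hA : 0 ≤ A) (haA : Tendsto a atTop (𝓝 A))
    (η : ℝ) (hη : 0 < η) :
    A * Real.Gamma η - 2 * Real.exp (-η) * η ^ η
      ≤ liminf (fun n : ℕ => ∑' ℓ : ℕ, hfun (a n) n η ((ℓ : ℝ) + 1)) atTop ∧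
    liminf (fun n : ℕ => ∑' ℓ : ℕ, hfun (a n) n η ((ℓ : ℝ) + 1)) atTop
      ≤ limsup (fun n : ℕ => ∑' ℓ : ℕ, hfun (a n) n η ((ℓ : ℝ) + 1)) atTop ∧
    limsup (fun n : ℕ => ∑' ℓ : ℕ, hfun (a n) n η ((ℓ : ℝ) + 1)) atTop
      ≤ A * Real.Gamma η + 2 * Real.exp (-η) * η ^ η := by
  classical
  set c : ℕ → ℝ := fun n => (n:ℝ) * (Real.exp (1 / a n) - 1) with hcdef
  set S : ℕ → ℝ := fun n => ∑' ℓ : ℕ, hfun (a n) n η ((ℓ:ℝ)+1) with hSdef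
  have hMg : ThmAux.g η η = Real.exp (-η) * η ^ η := rfl
  have hSH : ∀ n : ℕ, S n = ∑' ℓ : ℕ, ThmAux.H (a n) (c n) η ((ℓ:ℝ)+1) :=
    fun n => tsum_congr fun ℓ => by
      simp only [hSdef, hfun, ThmAux.H, ThmAux.g, hcdef, mul_assoc]
  have hcpos : ∀ n : ℕ, 1 ≤ n → 0 < c n := by
    intro n hn
    have h1 : (0:ℝ) < 1 / a n := div_pos one_pos (ha n)
    have h2 := Real.add_one_le_exp (1 / a n)
    have h3 : (0:ℝ) < n := by exact_mod_cast hn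
    have : (0:ℝ) < Real.exp (1 / a n) - 1 := by linarith
    exact mul_pos h3 this
  set J : ℝ → ℝ := fun b => ∫ t in Set.Ioo (0:ℝ) b, Real.exp (-t) * t ^ (η - 1) with hJ
  set u : ℕ → ℝ := fun n => a n * J (c n) with hu
  have hbound : ∀ᶠ n in atTop, u n - 2 * ThmAux.g η η ≤ S n ∧
      S n ≤ u n + 2 * ThmAux.g η η := by
    filter_upwards [eventually_ge_atTop 1] with n hn
    have h := ThmAux.tsum_bounds (ha n) (hcpos n hn) hη
    rw [ThmAux.integral_H (ha n) (hcpos n hn) hη] at h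
    rw [hSH n]
    exact h
  have hcA : Tendsto c atTop atTop := by
    have hev : ∀ᶠ n : ℕ in atTop, (n:ℝ) / (A + 1) ≤ c n := by
      filter_upwards [haA.eventually (eventually_lt_nhds (lt_add_one A))] with n hn
      have h1 : 1 / (A+1) ≤ 1 / a n := one_div_le_one_div_of_le (ha n) hn.le
      have h2 : 1 / a n ≤ Real.exp (1 / a n) - 1 := by
        linarith [Real.add_one_le_exp (1 / a n)]
      calc (n:ℝ) / (A+1) = (n:ℝ) * (1/(A+1)) := by ring
        _ ≤ (n:ℝ) * (Real.exp (1 / a n) - 1) :=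
            mul_le_mul_of_nonneg_left (h1.trans h2) (Nat.cast_nonneg n)
    exact tendsto_atTop_mono' _ hev
      (tendsto_natCast_atTop_atTop.atTop_div_const (by linarith))
  have hJlim : Tendsto J atTop (𝓝 (Real.Gamma η)) := by
    have h1 : Tendsto (fun b : ℝ => ∫ t in (0:ℝ)..b, Real.exp (-t) * t ^ (η-1)) atTop
        (𝓝 (∫ t in Set.Ioi (0:ℝ), Real.exp (-t) * t ^ (η-1))) :=
      MeasureTheory.intervalIntegral_tendsto_integral_Ioi 0
        (Real.GammaIntegral_convergent hη) tendsto_id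
    rw [← Real.Gamma_eq_integral hη] at h1
    refine h1.congr' ?_
    filter_upwards [eventually_ge_atTop (0:ℝ)] with b hb
    rw [intervalIntegral.integral_of_le hb, MeasureTheory.integral_Ioc_eq_integral_Ioo]
  have hulim : Tendsto u atTop (𝓝 (A * Real.Gamma η)) := haA.mul (hJlim.comp hcA)
  have hS0 : ∀ n, 0 ≤ S n := by
    intro n
    refine tsum_nonneg fun ℓ => ?_
    have h1 : (1:ℝ) ≤ Real.exp (1 / a n) := Real.one_le_exp (div_pos one_pos (ha n)).le
    have h2 : (0:ℝ) ≤ (n:ℝ) * ((Real.exp (1 / a n) - 1) * Real.exp (-((ℓ:ℝ)+1) / a n)) := by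
      have h3 : (0:ℝ) ≤ Real.exp (1 / a n) - 1 := by linarith
      exact mul_nonneg (Nat.cast_nonneg n) (mul_nonneg h3 (Real.exp_pos _).le)
    exact mul_nonneg (Real.exp_pos _).le (Real.rpow_nonneg h2 _)
  have hbddge : IsBoundedUnder (· ≥ ·) atTop S := isBoundedUnder_of ⟨0, hS0⟩
  have hbddle : IsBoundedUnder (· ≤ ·) atTop S := by
    obtain ⟨b, hb⟩ := (hulim.add_const (2 * ThmAux.g η η)).isBoundedUnder_le
    rw [eventually_map] at hb
    refine ⟨b, ?_⟩
    rw [eventually_map]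
    filter_upwards [hb, hbound] with n h1 h2
    exact h2.2.trans h1
  have heq1 : A * Real.Gamma η - 2 * Real.exp (-η) * η ^ η
      = A * Real.Gamma η - 2 * ThmAux.g η η := by rw [hMg]; ring
  have heq2 : A * Real.Gamma η + 2 * Real.exp (-η) * η ^ η
      = A * Real.Gamma η + 2 * ThmAux.g η η := by rw [hMg]; ring
  refine ⟨?_, ?_, ?_⟩
  · rw [heq1, ← (hulim.sub_const (2 * ThmAux.g η η)).liminf_eq]
    exact liminf_le_liminf (hbound.mono fun n h => h.1)
      ((hulim.sub_const _).isBoundedUnder_ge) (hbddle.isCoboundedUnder_ge)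
  · exact liminf_le_limsup hbddle hbddge
  · rw [heq2, ← (hulim.add_const (2 * ThmAux.g η η)).limsup_eq]
    exact limsup_le_limsup (hbound.mono fun n h => h.2)
      (hbddge.isCoboundedUnder_le) ((hulim.add_const _).isBoundedUnder_le)
end
end

section
/- Let a_n > 0 with a_n → ∞ and a_n/n → 0 as n → ∞, and fix an integer r ≥ 0. For the dynamic geometric distribution with parameter a_n, the Lindeberg-type condition holds: for every ε > 0, s_{r,n}^{−2} Σ_{ℓ=1}^∞ e^{−n p_ℓ^{(n)}} (n p_ℓ^{(n)})^{r+2} · 1[n p_ℓ^{(n)} ≥ ε s_{r,n}] → 0 as n → ∞. -/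
open MeasureTheory ProbabilityTheory Filter Topology
open scoped NNReal

noncomputable section

namespace LindAux

/-- `u_ℓ = c e^{-ℓ/a}` for `ℓ ≥ 1`, `0` for `ℓ = 0`. -/
def uu (a c : ℝ) (ℓ : ℕ) : ℝ := if ℓ = 0 then 0 else c * Real.exp (-(ℓ : ℝ) / a)

lemma uu_nonneg {a c : ℝ} (hc : 0 ≤ c) (ℓ : ℕ) : 0 ≤ uu a c ℓ := by
  unfold uu; split
  · exact le_rfl
  · positivity

lemma exp_half_pow_le (k : ℕ) {u : ℝ} (hu : 0 ≤ u) :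
    Real.exp (-(u / 2)) * u ^ k ≤ 2 ^ k * (k.factorial : ℝ) := by
  have h1 : (u / 2) ^ k / (k.factorial : ℝ) ≤ Real.exp (u / 2) :=
    Real.pow_div_factorial_le_exp (x := u/2) (by positivity) k
  have hfac : (0 : ℝ) < (k.factorial : ℝ) := by exact_mod_cast k.factorial_pos
  have h2 : u ^ k ≤ 2 ^ k * (k.factorial : ℝ) * Real.exp (u / 2) := by
    have := (div_le_iff₀ hfac).mp h1
    have h3 : (u / 2) ^ k = u ^ k / 2 ^ k := by rw [div_pow]
    rw [h3] at this
    have h4 : u ^ k ≤ (k.factorial : ℝ) * Real.exp (u / 2) * 2 ^ k := by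
      rw [div_le_iff₀ (by positivity : (0:ℝ) < 2 ^ k)] at this
      linarith
    linarith [h4]
  calc Real.exp (-(u / 2)) * u ^ k
      ≤ Real.exp (-(u / 2)) * (2 ^ k * (k.factorial : ℝ) * Real.exp (u / 2)) := by
        exact mul_le_mul_of_nonneg_left h2 (Real.exp_pos _).le
    _ = 2 ^ k * (k.factorial : ℝ) * (Real.exp (-(u / 2)) * Real.exp (u / 2)) := by ring
    _ = 2 ^ k * (k.factorial : ℝ) := by
        rw [← Real.exp_add]; simp


lemma uu_le_geom {a c : ℝ} (hc : 0 ≤ c) (ℓ : ℕ) :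
    uu a c ℓ ≤ c * Real.exp (-(1 / a)) ^ ℓ := by
  unfold uu
  split
  · positivity
  · rw [← Real.exp_nat_mul]
    apply le_of_eq
    congr 1
    ring

lemma q_lt_one {a : ℝ} (ha : 0 < a) : Real.exp (-(1 / a)) < 1 := by
  rw [Real.exp_lt_one_iff]
  have : 0 < 1/a := by positivity
  linarith

lemma summable_of_le_uu {a c A : ℝ} (ha : 0 < a) (hc : 0 ≤ c) (hA : 0 ≤ A) {f : ℕ → ℝ}
    (h0 : ∀ ℓ, 0 ≤ f ℓ) (hle : ∀ ℓ, f ℓ ≤ A * uu a c ℓ) : Summable f := by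
  have hq0 : (0:ℝ) ≤ Real.exp (-(1/a)) := (Real.exp_pos _).le
  have hgeo : Summable (fun ℓ : ℕ => A * (c * Real.exp (-(1/a)) ^ ℓ)) := by
    exact ((summable_geometric_of_lt_one hq0 (q_lt_one ha)).mul_left c).mul_left A
  refine Summable.of_nonneg_of_le h0 (fun ℓ => ?_) hgeo
  calc f ℓ ≤ A * uu a c ℓ := hle ℓ
    _ ≤ A * (c * Real.exp (-(1/a)) ^ ℓ) :=
        mul_le_mul_of_nonneg_left (uu_le_geom hc ℓ) hA

lemma tsum_q_le {a : ℝ} (ha : 0 < a) :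
    ∑' j : ℕ, Real.exp (-(1 / a)) ^ j ≤ a + 1 := by
  have hq0 : (0:ℝ) ≤ Real.exp (-(1/a)) := (Real.exp_pos _).le
  rw [tsum_geometric_of_lt_one hq0 (q_lt_one ha)]
  have h1 : 1 / a + 1 ≤ Real.exp (1 / a) := by
    have := Real.add_one_le_exp (1 / a)
    linarith
  have h2 : Real.exp (-(1/a)) ≤ a / (a + 1) := by
    rw [Real.exp_neg]
    rw [inv_le_comm₀ (Real.exp_pos _) (by positivity)]
    calc (a / (a+1))⁻¹ = (a + 1) / a := by rw [inv_div]
      _ = 1 / a + 1 := by field_simp; ring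
      _ ≤ Real.exp (1 / a) := h1
  have h3 : 1 / (a + 1) ≤ 1 - Real.exp (-(1/a)) := by
    have : a / (a + 1) + 1 / (a + 1) = 1 := by field_simp
    linarith
  have h4 : (0:ℝ) < 1 / (a + 1) := by positivity
  calc (1 - Real.exp (-(1/a)))⁻¹ ≤ (1 / (a + 1))⁻¹ := by
        apply inv_anti₀ h4 h3
    _ = a + 1 := by rw [one_div, inv_inv]

/-- Lemma A: the key upper bound `∑ e^{-u_ℓ/2} u_ℓ^{r+2} ≤ 2 K (a+1)`. -/
lemma tsum_g_le (r : ℕ) {a c : ℝ} (ha : 0 < a) (hc : 1 ≤ c) :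
    ∑' ℓ : ℕ, Real.exp (-(uu a c ℓ / 2)) * uu a c ℓ ^ (r + 2) ≤
      2 * (2 ^ (r + 3) * ((r + 3).factorial : ℝ)) * (a + 1) := by
  set K : ℝ := 2 ^ (r + 3) * ((r + 3).factorial : ℝ) with hK
  set q : ℝ := Real.exp (-(1 / a)) with hqdef
  have hq0 : (0:ℝ) ≤ q := (Real.exp_pos _).le
  have hq1 : q < 1 := q_lt_one ha
  have hc0 : (0:ℝ) < c := lt_of_lt_of_le one_pos hc
  have hK0 : (0:ℝ) < K := by positivity
  set t : ℕ → ℝ := fun ℓ => Real.exp (-(uu a c ℓ / 2)) * uu a c ℓ ^ (r + 2) with htdef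
  set m : ℕ := ⌊a * Real.log c⌋₊ with hm
  have hlogc : 0 ≤ Real.log c := Real.log_nonneg hc
  have ht0 : ∀ ℓ, 0 ≤ t ℓ := by
    intro ℓ
    have := uu_nonneg (a := a) hc0.le ℓ
    positivity
  have htK : ∀ ℓ, t ℓ ≤ K * uu a c ℓ := by
    intro ℓ
    have hu := uu_nonneg (a := a) hc0.le ℓ
    have h1 : Real.exp (-(uu a c ℓ / 2)) * uu a c ℓ ^ (r + 1) ≤
        2 ^ (r+1) * ((r+1).factorial : ℝ) := exp_half_pow_le (r+1) hu
    have h2 : (2:ℝ) ^ (r+1) * ((r+1).factorial : ℝ) ≤ K := by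
      rw [hK]
      apply mul_le_mul
      · apply pow_le_pow_right₀ (by norm_num) (by omega)
      · exact_mod_cast Nat.factorial_le (by omega)
      · positivity
      · positivity
    calc t ℓ = (Real.exp (-(uu a c ℓ / 2)) * uu a c ℓ ^ (r + 1)) * uu a c ℓ := by
          rw [htdef]; ring
      _ ≤ (2 ^ (r+1) * ((r+1).factorial : ℝ)) * uu a c ℓ := by
          exact mul_le_mul_of_nonneg_right h1 hu
      _ ≤ K * uu a c ℓ := mul_le_mul_of_nonneg_right h2 hu
  have hsum_t : Summable t := summable_of_le_uu ha hc0.le hK0.le ht0 htK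
  -- exp(m/a) ≤ c
  have hexp_m : Real.exp ((m:ℝ) / a) ≤ c := by
    rw [← Real.exp_log hc0]
    apply Real.exp_le_exp.mpr
    rw [div_le_iff₀ ha]
    calc (m:ℝ) ≤ a * Real.log c := Nat.floor_le (by positivity)
      _ = Real.log c * a := by ring
  -- c ≤ exp((m+1)/a)
  have hexp_m1 : c ≤ Real.exp (((m:ℝ) + 1) / a) := by
    rw [← Real.exp_log hc0]
    apply Real.exp_le_exp.mpr
    rw [le_div_iff₀ ha]
    calc Real.log c * a = a * Real.log c := by ring
      _ ≤ (m:ℝ) + 1 := le_of_lt (Nat.lt_floor_add_one _)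
  -- bound on the head
  have hub1 : ∀ ℓ ∈ Finset.range (m + 1), t ℓ ≤ K * q ^ (m - ℓ) := by
    intro ℓ hℓ
    rw [Finset.mem_range] at hℓ
    have hℓm : ℓ ≤ m := by omega
    rcases Nat.eq_zero_or_pos ℓ with h0 | hpos
    · subst h0
      have : t 0 = 0 := by
        rw [htdef]
        simp [uu]
      rw [this]
      positivity
    · have hne : ℓ ≠ 0 := by omega
      have huu : uu a c ℓ = c * Real.exp (-(ℓ:ℝ) / a) := by unfold uu; simp [hne]
      have hupos : 0 < uu a c ℓ := by rw [huu]; positivity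
      have h1 : t ℓ * uu a c ℓ ≤ K := by
        calc t ℓ * uu a c ℓ = Real.exp (-(uu a c ℓ / 2)) * uu a c ℓ ^ (r + 3) := by
              rw [htdef]; ring
          _ ≤ K := exp_half_pow_le (r+3) hupos.le
      have hq_u : 1 ≤ q ^ (m - ℓ) * uu a c ℓ := by
        have hcast : ((m - ℓ : ℕ) : ℝ) = (m:ℝ) - (ℓ:ℝ) := Nat.cast_sub hℓm
        have : q ^ (m - ℓ) * uu a c ℓ = c * Real.exp (-((m:ℝ) / a)) := by
          rw [huu, hqdef, ← Real.exp_nat_mul, hcast]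
          have e1 : Real.exp (((m:ℝ) - ℓ) * -(1/a)) * (c * Real.exp (-(ℓ:ℝ)/a)) =
              c * Real.exp (((m:ℝ) - ℓ) * -(1/a) + -(ℓ:ℝ)/a) := by
            rw [Real.exp_add]; ring
          rw [e1]
          congr 1
          field_simp
          ring
        rw [this]
        calc (1:ℝ) = Real.exp ((m:ℝ)/a) * Real.exp (-((m:ℝ)/a)) := by
              rw [← Real.exp_add]; simp
          _ ≤ c * Real.exp (-((m:ℝ)/a)) :=
              mul_le_mul_of_nonneg_right hexp_m (Real.exp_pos _).le
      calc t ℓ = t ℓ * 1 := by ring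
        _ ≤ t ℓ * (q ^ (m - ℓ) * uu a c ℓ) := by
            exact mul_le_mul_of_nonneg_left hq_u (ht0 ℓ)
        _ = (t ℓ * uu a c ℓ) * q ^ (m - ℓ) := by ring
        _ ≤ K * q ^ (m - ℓ) := mul_le_mul_of_nonneg_right h1 (by positivity)
  -- bound on the tail
  have hub2 : ∀ j : ℕ, t (j + (m + 1)) ≤ K * q ^ j := by
    intro j
    set ℓ : ℕ := j + (m + 1) with hℓ
    have hne : ℓ ≠ 0 := by omega
    have huu : uu a c ℓ = c * Real.exp (-(ℓ:ℝ) / a) := by unfold uu; simp [hne]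
    have hcast : (ℓ:ℝ) = (j:ℝ) + ((m:ℝ) + 1) := by push_cast [hℓ]; ring
    have huq : uu a c ℓ ≤ q ^ j := by
      rw [huu]
      calc c * Real.exp (-(ℓ:ℝ) / a)
          ≤ Real.exp (((m:ℝ) + 1) / a) * Real.exp (-(ℓ:ℝ) / a) :=
            mul_le_mul_of_nonneg_right hexp_m1 (Real.exp_pos _).le
        _ = Real.exp (((m:ℝ) + 1) / a + -(ℓ:ℝ) / a) := by rw [← Real.exp_add]
        _ = q ^ j := by
            rw [hqdef, ← Real.exp_nat_mul]
            congr 1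
            rw [hcast]
            field_simp
            ring
    calc t ℓ ≤ K * uu a c ℓ := htK ℓ
      _ ≤ K * q ^ j := mul_le_mul_of_nonneg_left huq hK0.le
  -- assemble
  have hsplit := (Summable.sum_add_tsum_nat_add (m + 1) hsum_t).symm
  have hgeosum : Summable (fun j : ℕ => q ^ j) := summable_geometric_of_lt_one hq0 hq1
  have hhead : ∑ ℓ ∈ Finset.range (m + 1), t ℓ ≤ K * (a + 1) := by
    calc ∑ ℓ ∈ Finset.range (m + 1), t ℓ ≤ ∑ ℓ ∈ Finset.range (m + 1), K * q ^ (m - ℓ) :=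
          Finset.sum_le_sum hub1
      _ = K * ∑ ℓ ∈ Finset.range (m + 1), q ^ (m - ℓ) := by rw [Finset.mul_sum]
      _ = K * ∑ j ∈ Finset.range (m + 1), q ^ j := by
          congr 1
          have := Finset.sum_range_reflect (fun i => q ^ i) (m + 1)
          simpa using this
      _ ≤ K * ∑' j : ℕ, q ^ j := by
          apply mul_le_mul_of_nonneg_left _ hK0.le
          exact Summable.sum_le_tsum _ (fun i _ => by positivity) hgeosum
      _ ≤ K * (a + 1) := mul_le_mul_of_nonneg_left (tsum_q_le ha) hK0.le
  have htail : ∑' j : ℕ, t (j + (m + 1)) ≤ K * (a + 1) := by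
    calc ∑' j : ℕ, t (j + (m + 1)) ≤ ∑' j : ℕ, K * q ^ j := by
          apply Summable.tsum_le_tsum hub2 ((summable_nat_add_iff (m+1)).mpr hsum_t)
            (hgeosum.mul_left K)
      _ = K * ∑' j : ℕ, q ^ j := by rw [tsum_mul_left]
      _ ≤ K * (a + 1) := mul_le_mul_of_nonneg_left (tsum_q_le ha) hK0.le
  calc ∑' ℓ : ℕ, Real.exp (-(uu a c ℓ / 2)) * uu a c ℓ ^ (r + 2)
      = ∑ ℓ ∈ Finset.range (m + 1), t ℓ + ∑' j : ℕ, t (j + (m + 1)) := hsplit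
    _ ≤ K * (a + 1) + K * (a + 1) := add_le_add hhead htail
    _ = 2 * K * (a + 1) := by ring

/-- Lemma B: lower bound for the `s²`-type sum. -/
lemma tsum_s2_ge (r : ℕ) {a c : ℝ} (ha : 6 ≤ a) (hc : 6 ≤ c) :
    ((r:ℝ) + 1) * Real.exp (-2) / (r.factorial : ℝ) * (a / 2) ≤
      ∑' ℓ : ℕ, ((r:ℝ) + 1 + uu a c ℓ) * Real.exp (-(uu a c ℓ)) * uu a c ℓ ^ (r + 1) /
        (r.factorial : ℝ) := by
  have ha0 : (0:ℝ) < a := by linarith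
  have hc0 : (0:ℝ) < c := by linarith
  have hfac : (0:ℝ) < (r.factorial : ℝ) := by exact_mod_cast r.factorial_pos
  set w : ℕ → ℝ := fun ℓ => ((r:ℝ) + 1 + uu a c ℓ) * Real.exp (-(uu a c ℓ)) *
    uu a c ℓ ^ (r + 1) / (r.factorial : ℝ) with hwdef
  have hw0 : ∀ ℓ, 0 ≤ w ℓ := by
    intro ℓ
    have := uu_nonneg (a := a) hc0.le ℓ
    have h1 : (0:ℝ) ≤ (r:ℝ) + 1 + uu a c ℓ := by positivity
    positivity
  -- summability
  have hwA : ∀ ℓ, w ℓ ≤ ((((r:ℝ)+1) * (2 ^ r * (r.factorial : ℝ)) +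
      2 ^ (r+1) * ((r+1).factorial : ℝ)) / (r.factorial : ℝ)) * uu a c ℓ := by
    intro ℓ
    set u := uu a c ℓ with hu
    have hu0 : 0 ≤ u := uu_nonneg hc0.le ℓ
    have he : Real.exp (-u) ≤ Real.exp (-(u/2)) := by
      apply Real.exp_le_exp.mpr; linarith
    have h1 : Real.exp (-(u/2)) * u ^ r ≤ 2 ^ r * (r.factorial : ℝ) :=
      exp_half_pow_le r hu0
    have h2 : Real.exp (-(u/2)) * u ^ (r+1) ≤ 2 ^ (r+1) * ((r+1).factorial : ℝ) :=
      exp_half_pow_le (r+1) hu0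
    have key : ((r:ℝ) + 1 + u) * Real.exp (-u) * u ^ (r+1) ≤
        (((r:ℝ)+1) * (2 ^ r * (r.factorial : ℝ)) + 2 ^ (r+1) * ((r+1).factorial : ℝ)) * u := by
      have e1 : ((r:ℝ) + 1 + u) * Real.exp (-u) * u ^ (r+1) =
          ((r:ℝ) + 1) * (Real.exp (-u) * u ^ r) * u + (Real.exp (-u) * u ^ (r+1)) * u := by
        ring
      rw [e1]
      have b1 : ((r:ℝ) + 1) * (Real.exp (-u) * u ^ r) * u ≤
          ((r:ℝ)+1) * (2 ^ r * (r.factorial : ℝ)) * u := by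
        apply mul_le_mul_of_nonneg_right _ hu0
        apply mul_le_mul_of_nonneg_left _ (by positivity)
        calc Real.exp (-u) * u ^ r ≤ Real.exp (-(u/2)) * u ^ r :=
              mul_le_mul_of_nonneg_right he (by positivity)
          _ ≤ 2 ^ r * (r.factorial : ℝ) := h1
      have b2 : (Real.exp (-u) * u ^ (r+1)) * u ≤ 2 ^ (r+1) * ((r+1).factorial : ℝ) * u := by
        apply mul_le_mul_of_nonneg_right _ hu0
        calc Real.exp (-u) * u ^ (r+1) ≤ Real.exp (-(u/2)) * u ^ (r+1) :=
              mul_le_mul_of_nonneg_right he (by positivity)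
          _ ≤ 2 ^ (r+1) * ((r+1).factorial : ℝ) := h2
      linarith
    rw [hwdef]
    simp only
    rw [div_mul_eq_mul_div, div_le_div_iff_of_pos_right hfac]
    exact key
  have hsum_w : Summable w := by
    refine summable_of_le_uu ha0 hc0.le ?_ hw0 hwA
    positivity
  -- the window
  set m₁ : ℕ := ⌈a * Real.log (c / 2)⌉₊ with hm₁
  set m₂ : ℕ := ⌊a * Real.log c⌋₊ with hm₂
  have hlog2 : (0.6931471803 : ℝ) < Real.log 2 := Real.log_two_gt_d9
  have hlogc2 : Real.log (c / 2) = Real.log c - Real.log 2 :=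
    Real.log_div (by linarith) (by norm_num)
  have hlogc2pos : 0 < Real.log (c / 2) := Real.log_pos (by linarith)
  have h1 : (m₁ : ℝ) < a * Real.log (c / 2) + 1 := Nat.ceil_lt_add_one (by positivity)
  have h2 : a * Real.log c - 1 < (m₂ : ℝ) := by
    have := Nat.lt_floor_add_one (a * Real.log c)
    linarith
  have halog2 : 4 < a * Real.log 2 := by
    have : 6 * (0.6931471803:ℝ) ≤ a * Real.log 2 := by
      apply mul_le_mul ha hlog2.le (by norm_num) (by linarith)
    linarith
  have hm12 : m₁ ≤ m₂ := by
    have : (m₁ : ℝ) < (m₂ : ℝ) := by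
      have e : a * Real.log (c/2) = a * Real.log c - a * Real.log 2 := by
        rw [hlogc2]; ring
      linarith
    exact_mod_cast this.le
  have hcard : (a / 2 : ℝ) ≤ ((Finset.Icc m₁ m₂).card : ℝ) := by
    rw [Nat.card_Icc]
    have hcast : ((m₂ + 1 - m₁ : ℕ) : ℝ) = (m₂ : ℝ) + 1 - (m₁ : ℝ) := by
      have : m₁ ≤ m₂ + 1 := by omega
      push_cast [Nat.cast_sub this]
      ring
    rw [hcast]
    have e : a * Real.log (c/2) = a * Real.log c - a * Real.log 2 := by
      rw [hlogc2]; ring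
    have h3 : 6 * (0.1931:ℝ) ≤ a * (Real.log 2 - 1/2) :=
      mul_le_mul ha (by linarith) (by norm_num) (by linarith)
    have h4 : a * (Real.log 2 - 1/2) = a * Real.log 2 - a/2 := by ring
    linarith
  -- each term in the window is at least δ
  have hterm : ∀ ℓ ∈ Finset.Icc m₁ m₂, ((r:ℝ) + 1) * Real.exp (-2) / (r.factorial : ℝ) ≤ w ℓ := by
    intro ℓ hℓ
    rw [Finset.mem_Icc] at hℓ
    have hℓ1 : ℓ ≠ 0 := by
      have : 1 ≤ m₁ := Nat.one_le_iff_ne_zero.mpr (by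
        simp only [hm₁, ne_eq, Nat.ceil_eq_zero, not_le]
        positivity)
      omega
    have huu : uu a c ℓ = c * Real.exp (-(ℓ:ℝ) / a) := by unfold uu; simp [hℓ1]
    have hub : uu a c ℓ ≤ 2 := by
      rw [huu]
      have hm1le : a * Real.log (c/2) ≤ (ℓ : ℝ) := by
        calc a * Real.log (c/2) ≤ (m₁ : ℝ) := Nat.le_ceil _
          _ ≤ (ℓ : ℝ) := by exact_mod_cast hℓ.1
      have : Real.exp (-(ℓ:ℝ)/a) ≤ Real.exp (-Real.log (c/2)) := by
        apply Real.exp_le_exp.mpr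
        rw [neg_div, neg_le_neg_iff, le_div_iff₀ ha0]
        calc Real.log (c/2) * a = a * Real.log (c/2) := by ring
          _ ≤ (ℓ:ℝ) := hm1le
      calc c * Real.exp (-(ℓ:ℝ)/a) ≤ c * Real.exp (-Real.log (c/2)) :=
            mul_le_mul_of_nonneg_left this hc0.le
        _ = c * (c/2)⁻¹ := by rw [Real.exp_neg, Real.exp_log (by linarith)]
        _ = 2 := by field_simp
    have hlb : 1 ≤ uu a c ℓ := by
      rw [huu]
      have hm2ge : (ℓ : ℝ) ≤ a * Real.log c := by
        calc (ℓ : ℝ) ≤ (m₂ : ℝ) := by exact_mod_cast hℓ.2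
          _ ≤ a * Real.log c := Nat.floor_le (mul_nonneg ha0.le (Real.log_nonneg (by linarith)))
      have : Real.exp (-Real.log c) ≤ Real.exp (-(ℓ:ℝ)/a) := by
        apply Real.exp_le_exp.mpr
        rw [neg_div, neg_le_neg_iff, div_le_iff₀ ha0]
        calc (ℓ:ℝ) ≤ a * Real.log c := hm2ge
          _ = Real.log c * a := by ring
      calc (1:ℝ) = c * c⁻¹ := by field_simp
        _ = c * Real.exp (-Real.log c) := by rw [Real.exp_neg, Real.exp_log hc0]
        _ ≤ c * Real.exp (-(ℓ:ℝ)/a) := mul_le_mul_of_nonneg_left this hc0.le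
    rw [hwdef]
    simp only
    set u := uu a c ℓ
    have hu0 : (0:ℝ) < u := by linarith
    rw [div_le_div_iff_of_pos_right hfac]
    have e2 : Real.exp (-2) ≤ Real.exp (-u) := Real.exp_le_exp.mpr (by linarith)
    have e3 : (1:ℝ) ≤ u ^ (r+1) := one_le_pow₀ hlb
    have p1 : ((r:ℝ)+1) * Real.exp (-2) ≤ ((r:ℝ)+1+u) * Real.exp (-u) :=
      mul_le_mul (by linarith) e2 (Real.exp_pos _).le (by positivity)
    calc ((r:ℝ)+1) * Real.exp (-2) = ((r:ℝ)+1) * Real.exp (-2) * 1 := by ring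
      _ ≤ (((r:ℝ)+1+u) * Real.exp (-u)) * u ^ (r+1) :=
          mul_le_mul p1 e3 zero_le_one (by positivity)
  -- assemble
  set δ : ℝ := ((r:ℝ) + 1) * Real.exp (-2) / (r.factorial : ℝ) with hδ
  have hδ0 : 0 ≤ δ := by rw [hδ]; positivity
  calc δ * (a / 2) ≤ δ * ((Finset.Icc m₁ m₂).card : ℝ) :=
        mul_le_mul_of_nonneg_left hcard hδ0
    _ = ((Finset.Icc m₁ m₂).card) • δ := by
        rw [nsmul_eq_mul]; ring
    _ ≤ ∑ ℓ ∈ Finset.Icc m₁ m₂, w ℓ := Finset.card_nsmul_le_sum _ _ _ hterm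
    _ ≤ ∑' ℓ : ℕ, w ℓ := Summable.sum_le_tsum _ (fun i _ => hw0 i) hsum_w

/-- pointwise bound `e^{-u/2} u^{r+2} ≤ K u`. -/
lemma g_le_Kuu (r : ℕ) {a c : ℝ} (hc : 0 ≤ c) (ℓ : ℕ) :
    Real.exp (-(uu a c ℓ / 2)) * uu a c ℓ ^ (r + 2) ≤
      (2 ^ (r + 3) * ((r + 3).factorial : ℝ)) * uu a c ℓ := by
  have hu := uu_nonneg (a := a) hc ℓ
  have h1 : Real.exp (-(uu a c ℓ / 2)) * uu a c ℓ ^ (r + 1) ≤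
      2 ^ (r+1) * ((r+1).factorial : ℝ) := exp_half_pow_le (r+1) hu
  have h2 : (2:ℝ) ^ (r+1) * ((r+1).factorial : ℝ) ≤ 2 ^ (r + 3) * ((r + 3).factorial : ℝ) := by
    apply mul_le_mul
    · apply pow_le_pow_right₀ (by norm_num) (by omega)
    · exact_mod_cast Nat.factorial_le (by omega)
    · positivity
    · positivity
  calc Real.exp (-(uu a c ℓ / 2)) * uu a c ℓ ^ (r + 2)
      = (Real.exp (-(uu a c ℓ / 2)) * uu a c ℓ ^ (r + 1)) * uu a c ℓ := by ring
    _ ≤ (2 ^ (r+1) * ((r+1).factorial : ℝ)) * uu a c ℓ := mul_le_mul_of_nonneg_right h1 hu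
    _ ≤ (2 ^ (r + 3) * ((r + 3).factorial : ℝ)) * uu a c ℓ := mul_le_mul_of_nonneg_right h2 hu

lemma tendsto_sqrt_atTop : Filter.Tendsto Real.sqrt Filter.atTop Filter.atTop := by
  apply Filter.tendsto_atTop_atTop.mpr
  intro b
  refine ⟨max 0 (b ^ 2), fun x hx => ?_⟩
  have h1 : Real.sqrt (b ^ 2) ≤ Real.sqrt x :=
    Real.sqrt_le_sqrt (le_trans (le_max_right _ _) hx)
  rw [Real.sqrt_sq_eq_abs] at h1
  calc b ≤ |b| := le_abs_self b
    _ ≤ Real.sqrt x := h1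

end LindAux

/-- if `a_n > 0`, `a_n → ∞` and `a_n/n → 0`, then the Lindeberg-type condition
holds for the dynamic geometric distribution with parameter `a_n`: for every `ε > 0`,
`s_{r,n}^{-2} Σ_ℓ e^{-n p_ℓ} (n p_ℓ)^{r+2} 1[n p_ℓ ≥ ε s_n]` → 0`. -/
theorem lindeberg_dynamic_geometric (a : ℕ → ℝ) (ha : ∀ n, 0 < a n)
    (ha_top : Tendsto a atTop atTop)
    (ha_n : Tendsto (fun n : ℕ => a n / (n : ℝ)) atTop (𝓝 0))
    (r : ℕ) :
    ∀ ε : ℝ, 0 < ε →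
      Tendsto
        (fun n : ℕ => (s2 (geomPMF (a n)) r n)⁻¹ *
          ∑' ℓ : ℕ, Real.exp (-((n : ℝ) * geomPMF (a n) ℓ)) *
            ((n : ℝ) * geomPMF (a n) ℓ) ^ (r + 2) *
            (if ε * Real.sqrt (s2 (geomPMF (a n)) r n) ≤ (n : ℝ) * geomPMF (a n) ℓ
              then 1 else 0))
        atTop (𝓝 0) := by
  intro ε hε
  set K : ℝ := 2 ^ (r + 3) * ((r + 3).factorial : ℝ) with hK
  set δ : ℝ := ((r:ℝ) + 1) * Real.exp (-2) / (r.factorial : ℝ) with hδ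
  have hδ0 : 0 < δ := by
    rw [hδ]
    have : (0:ℝ) < (r.factorial : ℝ) := by exact_mod_cast r.factorial_pos
    positivity
  have hK0 : 0 < K := by rw [hK]; positivity
  set c : ℕ → ℝ := fun n => (n : ℝ) * (Real.exp (1 / a n) - 1) with hcdef
  -- rewrite n * pmf in terms of uu
  have hrw : ∀ (n ℓ : ℕ), (n : ℝ) * geomPMF (a n) ℓ = LindAux.uu (a n) (c n) ℓ := by
    intro n ℓ
    unfold geomPMF LindAux.uu
    split
    · simp
    · simp only [hcdef]
      ring
  have hc0 : ∀ n, 0 ≤ c n := by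
    intro n
    rw [hcdef]
    have : (1:ℝ) ≤ Real.exp (1 / a n) := Real.one_le_exp (one_div_pos.mpr (ha n)).le
    have h2 : (0:ℝ) ≤ Real.exp (1 / a n) - 1 := by linarith
    positivity
  have hs2eq : ∀ n, s2 (geomPMF (a n)) r n =
      ∑' ℓ : ℕ, ((r : ℝ) + 1 + LindAux.uu (a n) (c n) ℓ) *
        Real.exp (-(LindAux.uu (a n) (c n) ℓ)) *
        LindAux.uu (a n) (c n) ℓ ^ (r + 1) / (r.factorial : ℝ) := by
    intro n
    unfold s2
    congr 1
    funext ℓ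
    rw [hrw n ℓ]
  have hs2nonneg : ∀ n, 0 ≤ s2 (geomPMF (a n)) r n := by
    intro n
    rw [hs2eq n]
    apply tsum_nonneg
    intro ℓ
    have hu := LindAux.uu_nonneg (a := a n) (hc0 n) ℓ
    have h1 : (0:ℝ) ≤ (r:ℝ) + 1 + LindAux.uu (a n) (c n) ℓ := by positivity
    have h2 : (0:ℝ) < (r.factorial : ℝ) := by exact_mod_cast r.factorial_pos
    positivity
  -- eventual conditions
  have hna : Tendsto (fun n : ℕ => (n : ℝ) / a n) atTop atTop := by
    have hpos : ∀ᶠ n : ℕ in atTop, a n / (n : ℝ) ∈ Set.Ioi (0:ℝ) := by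
      filter_upwards [eventually_ge_atTop 1] with n hn
      have hn' : (0:ℝ) < (n:ℝ) := by exact_mod_cast hn
      exact div_pos (ha n) hn'
    have h1 : Tendsto (fun n : ℕ => a n / (n : ℝ)) atTop (𝓝[>] 0) :=
      tendsto_nhdsWithin_of_tendsto_nhds_of_eventually_within _ ha_n hpos
    have h2 := h1.inv_tendsto_nhdsGT_zero
    have h3 : (fun n : ℕ => a n / (n : ℝ))⁻¹ = fun n : ℕ => (n : ℝ) / a n := by
      funext n
      simp [Pi.inv_apply, inv_div]
    rwa [h3] at h2
  have hev : ∀ᶠ n in atTop, 6 ≤ a n ∧ 6 ≤ c n := by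
    filter_upwards [ha_top.eventually_ge_atTop 6, hna.eventually_ge_atTop 6] with n h6a h6na
    refine ⟨h6a, ?_⟩
    have ha0 : 0 < a n := ha n
    have hle : (n : ℝ) / a n ≤ c n := by
      rw [hcdef]
      have h1 := Real.add_one_le_exp (1 / a n)
      have h2 : 1 / a n ≤ Real.exp (1 / a n) - 1 := by linarith
      calc (n : ℝ) / a n = (n : ℝ) * (1 / a n) := by ring
        _ ≤ (n : ℝ) * (Real.exp (1 / a n) - 1) :=
            mul_le_mul_of_nonneg_left h2 (Nat.cast_nonneg n)
    linarith
  -- the squeeze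
  set B : ℕ → ℝ := fun n => (8 * K / δ) * Real.exp (-(ε * Real.sqrt (δ * (a n / 2)) / 2))
    with hB
  have hBtendsto : Tendsto B atTop (𝓝 0) := by
    have t1 : Tendsto (fun n => δ * (a n / 2)) atTop atTop :=
      (ha_top.atTop_div_const (by norm_num)).const_mul_atTop hδ0
    have t2 : Tendsto (fun n => Real.sqrt (δ * (a n / 2))) atTop atTop :=
      LindAux.tendsto_sqrt_atTop.comp t1
    have t3 : Tendsto (fun n => -(ε * Real.sqrt (δ * (a n / 2)) / 2)) atTop atBot := by
      apply tendsto_neg_atTop_atBot.comp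
      exact (t2.const_mul_atTop hε).atTop_div_const (by norm_num)
    have t4 : Tendsto (fun n => Real.exp (-(ε * Real.sqrt (δ * (a n / 2)) / 2)))
        atTop (𝓝 0) := Real.tendsto_exp_atBot.comp t3
    have := t4.const_mul (8 * K / δ)
    simpa [hB] using this
  apply squeeze_zero' ?_ ?_ hBtendsto
  · -- nonnegativity
    filter_upwards with n
    apply mul_nonneg (inv_nonneg.mpr (hs2nonneg n))
    apply tsum_nonneg
    intro ℓ
    have hu : 0 ≤ (n : ℝ) * geomPMF (a n) ℓ := by
      rw [hrw n ℓ]; exact LindAux.uu_nonneg (hc0 n) ℓ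
    have : (0:ℝ) ≤ (if ε * Real.sqrt (s2 (geomPMF (a n)) r n) ≤ (n : ℝ) * geomPMF (a n) ℓ
        then (1:ℝ) else 0) := by split <;> norm_num
    positivity
  · -- the upper bound
    filter_upwards [hev] with n hn
    obtain ⟨h6a, h6c⟩ := hn
    have ha0 : (0:ℝ) < a n := ha n
    have hc1 : (1:ℝ) ≤ c n := by linarith
    set s := Real.sqrt (s2 (geomPMF (a n)) r n) with hs
    have hs0 : 0 ≤ s := Real.sqrt_nonneg _
    -- lower bound for s2
    have hlow : δ * (a n / 2) ≤ s2 (geomPMF (a n)) r n := by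
      rw [hs2eq n, hδ]
      exact LindAux.tsum_s2_ge r h6a h6c
    have hs2pos : 0 < s2 (geomPMF (a n)) r n := by
      have : 0 < δ * (a n / 2) := by positivity
      linarith
    -- summability of the dominating function
    have hgnonneg : ∀ ℓ, 0 ≤ Real.exp (-(LindAux.uu (a n) (c n) ℓ / 2)) *
        LindAux.uu (a n) (c n) ℓ ^ (r + 2) := by
      intro ℓ
      have := LindAux.uu_nonneg (a := a n) (hc0 n) ℓ
      positivity
    have hsum_g : Summable (fun ℓ => Real.exp (-(LindAux.uu (a n) (c n) ℓ / 2)) *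
        LindAux.uu (a n) (c n) ℓ ^ (r + 2)) :=
      LindAux.summable_of_le_uu ha0 (hc0 n) hK0.le hgnonneg
        (fun ℓ => LindAux.g_le_Kuu r (hc0 n) ℓ)
    -- pointwise bound
    have hpt : ∀ ℓ, Real.exp (-((n : ℝ) * geomPMF (a n) ℓ)) *
        ((n : ℝ) * geomPMF (a n) ℓ) ^ (r + 2) *
        (if ε * s ≤ (n : ℝ) * geomPMF (a n) ℓ then (1:ℝ) else 0) ≤
        Real.exp (-(ε * s / 2)) * (Real.exp (-(LindAux.uu (a n) (c n) ℓ / 2)) *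
          LindAux.uu (a n) (c n) ℓ ^ (r + 2)) := by
      intro ℓ
      rw [hrw n ℓ]
      set u := LindAux.uu (a n) (c n) ℓ with hu
      have hu0 : 0 ≤ u := LindAux.uu_nonneg (hc0 n) ℓ
      split
      · rename_i hind
        rw [mul_one]
        have e1 : Real.exp (-u) = Real.exp (-(u/2)) * Real.exp (-(u/2)) := by
          rw [← Real.exp_add]; congr 1; ring
        have e2 : Real.exp (-(u/2)) ≤ Real.exp (-(ε * s / 2)) := by
          apply Real.exp_le_exp.mpr; linarith
        calc Real.exp (-u) * u ^ (r + 2)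
            = Real.exp (-(u/2)) * (Real.exp (-(u/2)) * u ^ (r + 2)) := by rw [e1]; ring
          _ ≤ Real.exp (-(ε * s / 2)) * (Real.exp (-(u/2)) * u ^ (r + 2)) := by
              apply mul_le_mul_of_nonneg_right e2
              positivity
      · rw [mul_zero]
        positivity
    -- summability of the LHS
    have hlhs_nonneg : ∀ ℓ, 0 ≤ Real.exp (-((n : ℝ) * geomPMF (a n) ℓ)) *
        ((n : ℝ) * geomPMF (a n) ℓ) ^ (r + 2) *
        (if ε * s ≤ (n : ℝ) * geomPMF (a n) ℓ then (1:ℝ) else 0) := by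
      intro ℓ
      have hu : 0 ≤ (n : ℝ) * geomPMF (a n) ℓ := by
        rw [hrw n ℓ]; exact LindAux.uu_nonneg (hc0 n) ℓ
      have : (0:ℝ) ≤ (if ε * s ≤ (n : ℝ) * geomPMF (a n) ℓ then (1:ℝ) else 0) := by
        split <;> norm_num
      positivity
    have hsum_lhs : Summable (fun ℓ => Real.exp (-((n : ℝ) * geomPMF (a n) ℓ)) *
        ((n : ℝ) * geomPMF (a n) ℓ) ^ (r + 2) *
        (if ε * s ≤ (n : ℝ) * geomPMF (a n) ℓ then (1:ℝ) else 0)) := by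
      apply Summable.of_nonneg_of_le hlhs_nonneg hpt
      exact hsum_g.mul_left _
    -- bound the tsum
    have hsum_bound : (∑' ℓ : ℕ, Real.exp (-((n : ℝ) * geomPMF (a n) ℓ)) *
        ((n : ℝ) * geomPMF (a n) ℓ) ^ (r + 2) *
        (if ε * s ≤ (n : ℝ) * geomPMF (a n) ℓ then (1:ℝ) else 0)) ≤
        Real.exp (-(ε * s / 2)) * (2 * K * (a n + 1)) := by
      calc (∑' ℓ : ℕ, Real.exp (-((n : ℝ) * geomPMF (a n) ℓ)) *
          ((n : ℝ) * geomPMF (a n) ℓ) ^ (r + 2) *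
          (if ε * s ≤ (n : ℝ) * geomPMF (a n) ℓ then (1:ℝ) else 0))
          ≤ ∑' ℓ : ℕ, Real.exp (-(ε * s / 2)) * (Real.exp (-(LindAux.uu (a n) (c n) ℓ / 2)) *
            LindAux.uu (a n) (c n) ℓ ^ (r + 2)) :=
            Summable.tsum_le_tsum hpt hsum_lhs (hsum_g.mul_left _)
        _ = Real.exp (-(ε * s / 2)) * ∑' ℓ : ℕ, Real.exp (-(LindAux.uu (a n) (c n) ℓ / 2)) *
            LindAux.uu (a n) (c n) ℓ ^ (r + 2) := tsum_mul_left
        _ ≤ Real.exp (-(ε * s / 2)) * (2 * K * (a n + 1)) := by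
            apply mul_le_mul_of_nonneg_left _ (Real.exp_pos _).le
            rw [hK]
            exact LindAux.tsum_g_le r ha0 hc1
    -- final chain
    have hexp_le : Real.exp (-(ε * s / 2)) ≤ Real.exp (-(ε * Real.sqrt (δ * (a n / 2)) / 2)) := by
      apply Real.exp_le_exp.mpr
      have : Real.sqrt (δ * (a n / 2)) ≤ s := Real.sqrt_le_sqrt hlow
      nlinarith
    have hinv : (s2 (geomPMF (a n)) r n)⁻¹ ≤ (δ * (a n / 2))⁻¹ := by
      apply inv_anti₀ (by positivity) hlow
    calc (s2 (geomPMF (a n)) r n)⁻¹ * (∑' ℓ : ℕ, Real.exp (-((n : ℝ) * geomPMF (a n) ℓ)) *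
        ((n : ℝ) * geomPMF (a n) ℓ) ^ (r + 2) *
        (if ε * s ≤ (n : ℝ) * geomPMF (a n) ℓ then (1:ℝ) else 0))
        ≤ (δ * (a n / 2))⁻¹ * (Real.exp (-(ε * s / 2)) * (2 * K * (a n + 1))) := by
          apply mul_le_mul hinv hsum_bound
          · apply tsum_nonneg hlhs_nonneg
          · positivity
      _ ≤ (δ * (a n / 2))⁻¹ * (Real.exp (-(ε * Real.sqrt (δ * (a n / 2)) / 2)) *
          (2 * K * (2 * a n))) := by
          apply mul_le_mul_of_nonneg_left _ (by positivity)
          apply mul_le_mul hexp_le _ (by positivity) (Real.exp_pos _).le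
          have : a n + 1 ≤ 2 * a n := by linarith
          nlinarith [hK0]
      _ = (8 * K / δ) * Real.exp (-(ε * Real.sqrt (δ * (a n / 2)) / 2)) := by
          field_simp
          ring
      _ = B n := rfl
end
end

section
/- Fix an integer r ≥ 0 and γ > 1. For the dynamic discrete uniform distribution with parameter γ, the quantity s²_{r,n} is asymptotically equivalent to n^{r+1−γr} (r+1) / r! as n → ∞, i.e., the ratio of the two sides tends to 1. In particular, if r ≥ 1 and γ = 1 + 1/r then s²_{r,n} → (r+1)/r!, if r ≥ 1 and γ > 1 + 1/r then s²_{r,n} → 0, and if γ < 1 + 1/r then s²_{r,n} → ∞. -/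
open MeasureTheory ProbabilityTheory Filter Topology
open scoped NNReal

noncomputable section

/-! With `K = ⌊n^γ⌋` letters of mass `1/K`, `s²_{r,n} = K φ(n/K)` where
`φ(x) = (r+1+x) e^{-x} x^{r+1}/r! ~ (r+1) x^{r+1}/r!` as `x → 0`. Since `γ > 1` and `K ~ n^γ`,
`n/K → 0`, so `s²_{r,n} ~ (r+1) n^{r+1}/(r! K^r) ~ (r+1) n^{r+1-γr}/r!`. The three limits are
read off from the sign of the exponent `r+1-γr`. -/

open Asymptotics

def s2Summand (r : ℕ) (x : ℝ) : ℝ :=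
  ((r : ℝ) + 1 + x) * Real.exp (-x) * x ^ (r + 1) / (r.factorial : ℝ)

lemma s2_fixedUnifPMF (K r n : ℕ) :
    s2 (fixedUnifPMF K) r n = K * s2Summand r (n / K) := by
  have hsupp : ∀ ℓ ∉ Finset.Icc 1 K, s2Summand r (n * fixedUnifPMF K ℓ) = 0 := by
    intro ℓ hℓ
    rw [Finset.mem_Icc] at hℓ
    simp [fixedUnifPMF, if_neg hℓ, s2Summand]
  change ∑' ℓ, s2Summand r (n * fixedUnifPMF K ℓ) = _
  rw [tsum_eq_sum hsupp, Finset.sum_congr rfl fun ℓ hℓ => by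
    rw [fixedUnifPMF, if_pos (Finset.mem_Icc.mp hℓ), ← div_eq_mul_inv]]
  simp

lemma unifPMF_eq_fixedUnifPMF (γ : ℝ) (n : ℕ) :
    unifPMF γ n = fixedUnifPMF ⌊(n : ℝ) ^ γ⌋₊ :=
  rfl

lemma isEquivalent_s2Summand (r : ℕ) :
    s2Summand r ~[𝓝 0] fun x => x ^ (r + 1) * ((r : ℝ) + 1) / (r.factorial : ℝ) := by
  have hr : (r : ℝ) + 1 ≠ 0 := by positivity
  have hcorr : Tendsto (fun x : ℝ => ((r : ℝ) + 1 + x) / ((r : ℝ) + 1) * Real.exp (-x))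
      (𝓝 0) (𝓝 1) := by
    apply Continuous.tendsto' (by fun_prop)
    simp [hr]
  have h := (IsEquivalent.refl
      (u := fun x : ℝ => x ^ (r + 1) * ((r : ℝ) + 1) / (r.factorial : ℝ))).mul
    ((isEquivalent_const_iff_tendsto one_ne_zero).mpr hcorr)
  convert h using 1 <;> ext x
  · simp only [s2Summand, Pi.mul_apply]
    field_simp
  · simp

lemma isEquivalent_natFloor_rpow {γ : ℝ} (hγ : 0 < γ) :
    (fun n : ℕ => (⌊(n : ℝ) ^ γ⌋₊ : ℝ)) ~[atTop] fun n => (n : ℝ) ^ γ :=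
  isEquivalent_nat_floor.comp_tendsto ((tendsto_rpow_atTop hγ).comp tendsto_natCast_atTop_atTop)

lemma tendsto_natCast_div_of_isEquivalent_rpow {K : ℕ → ℝ} {γ : ℝ} (hγ : 1 < γ)
    (hK : K ~[atTop] fun n => (n : ℝ) ^ γ) :
    Tendsto (fun n : ℕ => (n : ℝ) / K n) atTop (𝓝 0) := by
  refine ((IsEquivalent.refl (u := fun n : ℕ => (n : ℝ))).div hK).symm.tendsto_nhds ?_
  have hpow : Tendsto (fun n : ℕ => (n : ℝ) ^ (-(γ - 1))) atTop (𝓝 0) :=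
    (tendsto_rpow_neg_atTop (by linarith)).comp tendsto_natCast_atTop_atTop
  refine hpow.congr' ?_
  filter_upwards [eventually_gt_atTop 0] with n hn
  rw [Pi.div_apply, Real.rpow_neg (Nat.cast_nonneg n), Real.rpow_sub_one (by positivity), inv_div]

lemma isEquivalent_s2_fixedUnifPMF (r : ℕ) {K : ℕ → ℕ} {γ : ℝ} (hγ : 1 < γ)
    (hK : (fun n => (K n : ℝ)) ~[atTop] fun n => (n : ℝ) ^ γ) :
    (fun n : ℕ => s2 (fixedUnifPMF (K n)) r n) ~[atTop] fun n : ℕ =>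
      (n : ℝ) ^ ((r : ℝ) + 1 - γ * (r : ℝ)) * ((r : ℝ) + 1) / (r.factorial : ℝ) := by
  have hKpos : ∀ᶠ n in atTop, (0 : ℝ) < K n :=
    hK.symm.tendsto_atTop ((tendsto_rpow_atTop (by linarith)).comp tendsto_natCast_atTop_atTop)
      |>.eventually_gt_atTop 0
  have hsummand := (isEquivalent_s2Summand r).comp_tendsto
    (tendsto_natCast_div_of_isEquivalent_rpow hγ hK)
  have hK_pow : (fun n : ℕ => s2 (fixedUnifPMF (K n)) r n) ~[atTop]
      fun n => (n : ℝ) ^ (r + 1) * ((r : ℝ) + 1) / (r.factorial : ℝ) / (K n : ℝ) ^ r := by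
    refine ((IsEquivalent.refl (u := fun n => (K n : ℝ))).mul hsummand).congr_left ?_
      |>.congr_right ?_
    · exact Eventually.of_forall fun n => (s2_fixedUnifPMF (K n) r n).symm
    · filter_upwards [hKpos] with n hn
      simp only [Pi.mul_apply, Function.comp_apply, div_pow]
      field_simp
      ring
  refine (hK_pow.trans (IsEquivalent.refl.div (hK.pow r))).congr_right ?_
  filter_upwards [eventually_gt_atTop 0] with n hn
  have hn' : (0 : ℝ) < n := Nat.cast_pos.mpr hn
  rw [Pi.div_apply, Pi.pow_apply, Real.rpow_sub hn', Real.rpow_mul hn'.le, Real.rpow_natCast,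
    ← Nat.cast_add_one, Real.rpow_natCast]
  ring

/-- for the dynamic discrete uniform distribution with parameter `γ > 1` and
fixed `r ≥ 0`, `s²_{r,n} ∼ n^{r+1-γr} (r+1)/r!`.  In particular, if `r ≥ 1` and `γ = 1 + 1/r`
then `s²_{r,n} → (r+1)/r!`; if `r ≥ 1` and `γ > 1 + 1/r` then `s²_{r,n} → 0`; and if
`γ < 1 + 1/r` (i.e. `rγ < r + 1`, with `1/0 = ∞` for `r = 0`) then `s²_{r,n} → ∞`. -/
theorem s2_asymptotic_dynamic_uniform_gamma_gt_one (r : ℕ) (γ : ℝ) (hγ : 1 < γ) :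
    Tendsto
      (fun n : ℕ => s2 (unifPMF γ n) r n /
        ((n : ℝ) ^ ((r : ℝ) + 1 - γ * (r : ℝ)) * ((r : ℝ) + 1) / (r.factorial : ℝ)))
      atTop (𝓝 1) ∧
    (1 ≤ r → γ = 1 + 1 / (r : ℝ) →
      Tendsto (fun n : ℕ => s2 (unifPMF γ n) r n) atTop
        (𝓝 (((r : ℝ) + 1) / (r.factorial : ℝ)))) ∧
    (1 ≤ r → 1 + 1 / (r : ℝ) < γ →
      Tendsto (fun n : ℕ => s2 (unifPMF γ n) r n) atTop (𝓝 0)) ∧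
    ((r : ℝ) * γ < (r : ℝ) + 1 →
      Tendsto (fun n : ℕ => s2 (unifPMF γ n) r n) atTop atTop) := by
  simp only [unifPMF_eq_fixedUnifPMF]
  have hequiv := isEquivalent_s2_fixedUnifPMF r hγ (isEquivalent_natFloor_rpow (by linarith))
  refine ⟨(isEquivalent_iff_tendsto_one ?_).mp hequiv, fun hr hγr => ?_, fun hr hγr => ?_,
    fun hγr => ?_⟩
  · filter_upwards [eventually_gt_atTop 0] with n hn
    positivity
  · have hexp : (r : ℝ) + 1 - γ * r = 0 := by
      rw [hγr]; field_simp; ring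
    refine hequiv.tendsto_nhds_iff.mpr ?_
    simp only [hexp, Real.rpow_zero, one_mul]
    exact tendsto_const_nhds
  · have hr' : (0 : ℝ) < r := Nat.cast_pos.mpr hr
    have hexp : 0 < -((r : ℝ) + 1 - γ * r) := by
      have := (div_lt_iff₀ hr').mp (lt_sub_iff_add_lt'.mpr hγr)
      linarith
    refine hequiv.tendsto_nhds_iff.mpr ?_
    simpa [Function.comp_def] using ((tendsto_rpow_neg_atTop hexp).comp
      tendsto_natCast_atTop_atTop).mul_const ((r : ℝ) + 1) |>.div_const (r.factorial : ℝ)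
  · have hexp : 0 < (r : ℝ) + 1 - γ * r := by linarith
    refine hequiv.tendsto_atTop_iff.mpr ?_
    exact ((tendsto_rpow_atTop hexp).comp tendsto_natCast_atTop_atTop).atTop_mul_const
      (by positivity) |>.atTop_div_const (by positivity)
end
end

section
/- Fix an integer r ≥ 0 and γ ∈ (0,1). For the dynamic discrete uniform distribution with parameter γ, for all n with n^γ > 1 one has s²_{r,n} ≤ (n^γ − 1)^{−r} (r+1 + n/(n^γ − 1)) e^{−n/(n^γ+1)} n^{r+1} / r!, and consequently s²_{r,n} → 0 as n → ∞. -/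
open MeasureTheory ProbabilityTheory Filter Topology
open scoped NNReal

noncomputable section

lemma s2_unif_eq (γ : ℝ) (r n : ℕ) :
    s2 (unifPMF γ n) r n =
      (⌊(n : ℝ) ^ γ⌋₊ : ℝ) *
        (((r : ℝ) + 1 + (n : ℝ) * ((⌊(n : ℝ) ^ γ⌋₊ : ℝ))⁻¹) *
          Real.exp (-((n : ℝ) * (⌊(n : ℝ) ^ γ⌋₊ : ℝ)⁻¹)) *
          ((n : ℝ) * (⌊(n : ℝ) ^ γ⌋₊ : ℝ)⁻¹) ^ (r + 1) / (r.factorial : ℝ)) := by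
  set K := ⌊(n : ℝ) ^ γ⌋₊ with hK
  unfold s2 unifPMF
  have h0 : ∀ ℓ : ℕ, ℓ ∉ Finset.Icc 1 K →
      ((r : ℝ) + 1 + (n : ℝ) * (if 1 ≤ ℓ ∧ ℓ ≤ K then (K : ℝ)⁻¹ else 0)) *
          Real.exp (-((n : ℝ) * (if 1 ≤ ℓ ∧ ℓ ≤ K then (K : ℝ)⁻¹ else 0))) *
          ((n : ℝ) * (if 1 ≤ ℓ ∧ ℓ ≤ K then (K : ℝ)⁻¹ else 0)) ^ (r + 1) / (r.factorial : ℝ) = 0 := by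
    intro ℓ hℓ
    rw [Finset.mem_Icc] at hℓ
    rw [if_neg hℓ]
    simp
  rw [tsum_eq_sum (s := Finset.Icc 1 K) h0]
  have h1 : ∀ ℓ ∈ Finset.Icc 1 K,
      ((r : ℝ) + 1 + (n : ℝ) * (if 1 ≤ ℓ ∧ ℓ ≤ K then (K : ℝ)⁻¹ else 0)) *
          Real.exp (-((n : ℝ) * (if 1 ≤ ℓ ∧ ℓ ≤ K then (K : ℝ)⁻¹ else 0))) *
          ((n : ℝ) * (if 1 ≤ ℓ ∧ ℓ ≤ K then (K : ℝ)⁻¹ else 0)) ^ (r + 1) / (r.factorial : ℝ)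
        = ((r : ℝ) + 1 + (n : ℝ) * (K : ℝ)⁻¹) * Real.exp (-((n : ℝ) * (K : ℝ)⁻¹)) *
            ((n : ℝ) * (K : ℝ)⁻¹) ^ (r + 1) / (r.factorial : ℝ) := by
    intro ℓ hℓ
    rw [Finset.mem_Icc] at hℓ
    rw [if_pos hℓ]
  rw [Finset.sum_congr rfl h1, Finset.sum_const, Nat.card_Icc, nsmul_eq_mul]
  norm_num

lemma s2_unif_le (r : ℕ) (γ : ℝ) (hγ0 : 0 < γ) (n : ℕ) (hn : 1 < (n : ℝ) ^ γ) :
    s2 (unifPMF γ n) r n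
      ≤ (((n : ℝ) ^ γ - 1)⁻¹) ^ r *
          (((r : ℝ) + 1) + (n : ℝ) / ((n : ℝ) ^ γ - 1)) *
          Real.exp (-((n : ℝ) / ((n : ℝ) ^ γ + 1))) * (n : ℝ) ^ (r + 1) /
          (r.factorial : ℝ) := by
  have hn0 : (0 : ℝ) < n := by
    rcases Nat.eq_zero_or_pos n with h | h
    · subst h; rw [Nat.cast_zero, Real.zero_rpow hγ0.ne'] at hn; linarith
    · exact_mod_cast h
  set K := ⌊(n : ℝ) ^ γ⌋₊ with hKdef
  have hK1 : 1 ≤ K := Nat.le_floor (by exact_mod_cast hn.le)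
  have hKpos : (0 : ℝ) < K := by exact_mod_cast hK1
  have hKle : (K : ℝ) ≤ (n : ℝ) ^ γ := Nat.floor_le (by positivity)
  have hKge : (n : ℝ) ^ γ - 1 ≤ (K : ℝ) := (Nat.sub_one_lt_floor _).le
  have hg1 : (0 : ℝ) < (n : ℝ) ^ γ - 1 := by linarith
  rw [s2_unif_eq]
  have key : (K : ℝ) *
      (((r : ℝ) + 1 + (n : ℝ) * ((K : ℝ))⁻¹) * Real.exp (-((n : ℝ) * (K : ℝ)⁻¹)) *
        ((n : ℝ) * (K : ℝ)⁻¹) ^ (r + 1) / (r.factorial : ℝ))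
      = ((K : ℝ)⁻¹) ^ r * (((r : ℝ) + 1) + (n : ℝ) / (K : ℝ)) *
          Real.exp (-((n : ℝ) / (K : ℝ))) * (n : ℝ) ^ (r + 1) / (r.factorial : ℝ) := by
    rw [mul_pow, pow_succ ((K : ℝ)⁻¹)]
    field_simp
  rw [key]
  have hfac : (0 : ℝ) < r.factorial := by exact_mod_cast r.factorial_pos
  gcongr ?_ ^ r * ?_ * Real.exp ?_ * _ / _
  · exact inv_anti₀ hg1 hKge
  · gcongr
  · gcongr
    linarith

lemma s2_unif_nonneg (γ : ℝ) (r n : ℕ) : 0 ≤ s2 (unifPMF γ n) r n := by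
  apply tsum_nonneg
  intro ℓ
  have hp : 0 ≤ unifPMF γ n ℓ := by
    unfold unifPMF; split <;> positivity
  have h1 : (0:ℝ) ≤ (n : ℝ) * unifPMF γ n ℓ := mul_nonneg (Nat.cast_nonneg n) hp
  apply div_nonneg _ (Nat.cast_nonneg _)
  apply mul_nonneg (mul_nonneg (by linarith) (Real.exp_nonneg _)) (pow_nonneg h1 _)

lemma s2_unif_tendsto (r : ℕ) (γ : ℝ) (hγ0 : 0 < γ) (hγ1 : γ < 1) :
    Tendsto (fun n : ℕ => s2 (unifPMF γ n) r n) atTop (𝓝 0) := by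
  have hδ : (0:ℝ) < 1 - γ := by linarith
  set g : ℕ → ℝ := fun n =>
    (((r:ℝ) + 2) / (r.factorial : ℝ)) *
      (((n:ℝ) ^ (1 - γ)) ^ (((r:ℝ) + 2) / (1 - γ)) *
        Real.exp (-(1/2) * (n:ℝ) ^ (1 - γ))) with hg
  have hnat : Tendsto (fun n : ℕ => (n:ℝ) ^ (1 - γ)) atTop atTop :=
    (tendsto_rpow_atTop hδ).comp tendsto_natCast_atTop_atTop
  have hgt : Tendsto g atTop (𝓝 0) := by
    have h1 := tendsto_rpow_mul_exp_neg_mul_atTop_nhds_zero (((r:ℝ) + 2) / (1 - γ)) (1/2)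
      (by norm_num)
    have := (h1.comp hnat).const_mul (((r:ℝ) + 2) / (r.factorial : ℝ))
    simpa [hg, Function.comp] using this
  have hev : ∀ᶠ n : ℕ in atTop, s2 (unifPMF γ n) r n ≤ g n := by
    have hev2 : ∀ᶠ n : ℕ in atTop, (2:ℝ) ≤ (n:ℝ) ^ γ :=
      ((tendsto_rpow_atTop hγ0).comp tendsto_natCast_atTop_atTop).eventually (eventually_ge_atTop 2)
    filter_upwards [hev2, eventually_ge_atTop 1] with n h2 hn1
    have hn1' : (1:ℝ) ≤ (n:ℝ) := by exact_mod_cast hn1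
    have hn0 : (0:ℝ) < n := by linarith
    have hgt1 : 1 < (n:ℝ) ^ γ := by linarith
    have hg1 : (1:ℝ) ≤ (n:ℝ) ^ γ - 1 := by linarith
    have hg0 : (0:ℝ) < (n:ℝ) ^ γ - 1 := by linarith
    refine (s2_unif_le r γ hγ0 n hgt1).trans ?_
    have hfac : (0:ℝ) < r.factorial := by exact_mod_cast r.factorial_pos
    have hA : (((n:ℝ) ^ γ - 1)⁻¹) ^ r ≤ 1 :=
      pow_le_one₀ (by positivity) (inv_le_one_of_one_le₀ hg1)
    have hB : ((r:ℝ) + 1) + (n:ℝ) / ((n:ℝ) ^ γ - 1) ≤ ((r:ℝ) + 2) * n := by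
      have : (n:ℝ) / ((n:ℝ) ^ γ - 1) ≤ n := div_le_self hn0.le hg1
      nlinarith
    have hE : Real.exp (-((n:ℝ) / ((n:ℝ) ^ γ + 1))) ≤ Real.exp (-(1/2) * (n:ℝ) ^ (1 - γ)) := by
      rw [Real.exp_le_exp]
      have hrw : (n:ℝ) ^ (1 - γ) = (n:ℝ) / (n:ℝ) ^ γ := by
        rw [Real.rpow_sub hn0, Real.rpow_one]
      rw [hrw]
      have hx : (0:ℝ) < (n:ℝ) ^ γ := by linarith
      have hkey : (1/2:ℝ) * ((n:ℝ) / (n:ℝ) ^ γ) ≤ (n:ℝ) / ((n:ℝ) ^ γ + 1) := by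
        have heq : (1/2:ℝ) * ((n:ℝ) / (n:ℝ) ^ γ) = (n:ℝ) / (2 * (n:ℝ) ^ γ) := by
          rw [eq_div_iff (by positivity)]
          field_simp
        rw [heq]
        exact div_le_div_of_nonneg_left hn0.le (by positivity) (by linarith)
      linarith
    have hP : (((n:ℝ) ^ (1 - γ)) ^ (((r:ℝ) + 2) / (1 - γ))) = (n:ℝ) ^ (r + 2 : ℕ) := by
      rw [← Real.rpow_natCast (n:ℝ) (r + 2), ← Real.rpow_mul (by positivity)]
      congr 1
      push_cast
      field_simp
    have step : (((n:ℝ) ^ γ - 1)⁻¹) ^ r * (((r:ℝ) + 1) + (n:ℝ) / ((n:ℝ) ^ γ - 1)) *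
          Real.exp (-((n:ℝ) / ((n:ℝ) ^ γ + 1))) * (n:ℝ) ^ (r + 1) / (r.factorial : ℝ)
        ≤ 1 * (((r:ℝ) + 2) * (n:ℝ)) * Real.exp (-(1/2) * (n:ℝ) ^ (1 - γ)) *
            (n:ℝ) ^ (r + 1) / (r.factorial : ℝ) := by
      gcongr ?_ * ?_ * ?_ * _ / _
      all_goals first
        | exact hA
        | exact hB
        | exact hE
        | positivity
        | exact add_nonneg (by positivity) (by positivity)
    refine step.trans (le_of_eq ?_)
    simp only [hg]
    rw [hP]
    ring
  exact squeeze_zero' (Eventually.of_forall fun n => s2_unif_nonneg γ r n) hev hgt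

/-- for the dynamic discrete uniform distribution with parameter `γ ∈ (0,1)` and
fixed `r ≥ 0`, for all `n` with `n^γ > 1` one has
`s²_{r,n} ≤ (n^γ - 1)^{-r} (r+1 + n/(n^γ-1)) e^{-n/(n^γ+1)} n^{r+1}/r!`, and `s²_{r,n} → 0`. -/
theorem s2_tendsto_zero_dynamic_uniform_gamma_lt_one (r : ℕ) (γ : ℝ)
    (hγ0 : 0 < γ) (hγ1 : γ < 1) :
    (∀ n : ℕ, 1 < (n : ℝ) ^ γ →
      s2 (unifPMF γ n) r n
        ≤ (((n : ℝ) ^ γ - 1)⁻¹) ^ r *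
            (((r : ℝ) + 1) + (n : ℝ) / ((n : ℝ) ^ γ - 1)) *
            Real.exp (-((n : ℝ) / ((n : ℝ) ^ γ + 1))) * (n : ℝ) ^ (r + 1) /
            (r.factorial : ℝ)) ∧
    Tendsto (fun n : ℕ => s2 (unifPMF γ n) r n) atTop (𝓝 0) :=
  ⟨fun n hn => s2_unif_le r γ hγ0 n hn, s2_unif_tendsto r γ hγ0 hγ1⟩
end
end
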